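/- arXiv:2604.23229 — 10 statements merged into one kernel-verified Lean document; each statement's English description precedes it below -/
import Mathlib

section
/- The scalar inequality for the standard normal density: for every real x, φ(x) ≥ (4/√(2π)) · Φ(x) · (1 − Φ(x)), where φ is the standard Gaussian density and Φ its cumulative distribution function. -/
/-- The standard normal density `φ(x) = exp(−x²/2)/√(2π)`. -/
noncomputable def stdGaussianPDF (x : ℝ) : ℝ :=
  Real.exp (-x ^ 2 / 2) / Real.sqrt (2 * Real.pi)

/-- The standard normal cumulative distribution function `Φ(x) = ∫_{−∞}^x φ(t) dt`. -/
noncomputable def stdGaussianCDF (x : ℝ) : ℝ :=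
  ∫ t in Set.Iic x, stdGaussianPDF t

open Real MeasureTheory Set Filter Topology

lemma pdf_eq (x : ℝ) : stdGaussianPDF x = Real.exp (-(1/2) * x ^ 2) * (Real.sqrt (2 * Real.pi))⁻¹ := by
  rw [stdGaussianPDF]; ring_nf

lemma integrable_pdf : Integrable stdGaussianPDF := by
  have := (integrable_exp_neg_mul_sq (by norm_num : (0:ℝ) < 1/2)).mul_const
    (Real.sqrt (2 * Real.pi))⁻¹
  exact this.congr (Filter.Eventually.of_forall fun x => (pdf_eq x).symm)

lemma integral_pdf : ∫ x, stdGaussianPDF x = 1 := by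
  have h := integral_gaussian (1/2)
  have h2 : ∫ x : ℝ, Real.exp (-(1/2) * x ^ 2) = Real.sqrt (2 * Real.pi) := by
    rw [h]; norm_num; rw [mul_comm]
  calc ∫ x, stdGaussianPDF x
      = (∫ x : ℝ, Real.exp (-(1/2) * x ^ 2)) * (Real.sqrt (2 * Real.pi))⁻¹ := by
        rw [← integral_mul_const]; congr 1; funext x; rw [pdf_eq]
    _ = 1 := by
        rw [h2, mul_inv_cancel₀ (by positivity)]

lemma continuous_pdf : Continuous stdGaussianPDF := by
  unfold stdGaussianPDF; fun_prop

lemma pdf_nonneg (x : ℝ) : 0 ≤ stdGaussianPDF x := by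
  unfold stdGaussianPDF; positivity

lemma cdf_neg (x : ℝ) : stdGaussianCDF (-x) = 1 - stdGaussianCDF x := by
  have h1 : stdGaussianCDF x + (∫ t in Set.Ioi x, stdGaussianPDF t) = 1 := by
    rw [stdGaussianCDF, intervalIntegral.integral_Iic_add_Ioi integrable_pdf.integrableOn
      integrable_pdf.integrableOn, integral_pdf]
  have h2 : stdGaussianCDF (-x) = ∫ t in Set.Ioi x, stdGaussianPDF t := by
    rw [stdGaussianCDF, ← integral_comp_neg_Ioi]
    congr 1; funext t
    simp [stdGaussianPDF]
  linarith

lemma cdf_eq (x : ℝ) :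
    stdGaussianCDF x = stdGaussianCDF 0 + ∫ t in (0:ℝ)..x, stdGaussianPDF t := by
  have := intervalIntegral.integral_Iic_sub_Iic (μ := volume) (f := stdGaussianPDF)
    integrable_pdf.integrableOn integrable_pdf.integrableOn (a := 0) (b := x)
  rw [stdGaussianCDF, stdGaussianCDF, ← this]; ring

lemma hasDerivAt_cdf (x : ℝ) : HasDerivAt stdGaussianCDF (stdGaussianPDF x) x := by
  have h := (continuous_pdf.integral_hasStrictDerivAt 0 x).hasDerivAt
  have : stdGaussianCDF = fun u => stdGaussianCDF 0 + ∫ t in (0:ℝ)..u, stdGaussianPDF t := by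
    funext u; exact cdf_eq u
  rw [this]
  simpa using (h.const_add (stdGaussianCDF 0))

lemma tendsto_cdf : Tendsto stdGaussianCDF atTop (𝓝 1) := by
  have h := tendsto_setIntegral_of_monotone (μ := volume) (f := stdGaussianPDF)
    (s := fun r : ℝ => Set.Iic r) (fun i => measurableSet_Iic)
    (fun a b hab => Set.Iic_subset_Iic.2 hab)
    (by rw [Set.iUnion_Iic]; exact integrable_pdf.integrableOn)
  rw [Set.iUnion_Iic, MeasureTheory.Measure.restrict_univ, integral_pdf] at h
  exact h

noncomputable def Efun (x : ℝ) : ℝ := 2 * stdGaussianCDF x - 1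

noncomputable def kfun (x : ℝ) : ℝ := 4 * (Real.sqrt (2 * Real.pi))⁻¹ * Efun x - x

noncomputable def gfun (x : ℝ) : ℝ := Efun x ^ 2 + Real.exp (-x ^ 2 / 2) - 1

lemma cdf_zero : stdGaussianCDF 0 = 1/2 := by
  have := cdf_neg 0
  rw [neg_zero] at this; linarith

lemma Efun_zero : Efun 0 = 0 := by rw [Efun, cdf_zero]; norm_num

lemma kfun_zero : kfun 0 = 0 := by rw [kfun, Efun_zero]; ring

lemma gfun_zero : gfun 0 = 0 := by rw [gfun, Efun_zero]; norm_num

lemma hasDerivAt_E (x : ℝ) : HasDerivAt Efun (2 * stdGaussianPDF x) x := by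
  exact ((hasDerivAt_cdf x).const_mul 2).sub_const 1

lemma hasDerivAt_k (x : ℝ) :
    HasDerivAt kfun (4 / Real.pi * Real.exp (-x ^ 2 / 2) - 1) x := by
  have h := (((hasDerivAt_E x).const_mul (4 * (Real.sqrt (2 * Real.pi))⁻¹)).sub
    (hasDerivAt_id x))
  have heq : 4 * (Real.sqrt (2 * Real.pi))⁻¹ * (2 * stdGaussianPDF x) - 1
      = 4 / Real.pi * Real.exp (-x ^ 2 / 2) - 1 := by
    have hs : (Real.sqrt (2 * Real.pi))⁻¹ * (Real.sqrt (2 * Real.pi))⁻¹ = (2*Real.pi)⁻¹ := by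
      rw [← mul_inv, Real.mul_self_sqrt (by positivity)]
    rw [pdf_eq, show 4 * (Real.sqrt (2 * Real.pi))⁻¹ *
      (2 * (Real.exp (-(1/2) * x ^ 2) * (Real.sqrt (2 * Real.pi))⁻¹))
      = 8 * ((Real.sqrt (2*Real.pi))⁻¹ * (Real.sqrt (2*Real.pi))⁻¹) * Real.exp (-(1/2)*x^2)
      from by ring, hs, show -(1/2)*x^2 = -x^2/2 from by ring]
    have hpi : Real.pi ≠ 0 := Real.pi_ne_zero
    field_simp
    ring
  rw [← heq]
  exact h

lemma hasDerivAt_exp_part (x : ℝ) :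
    HasDerivAt (fun y : ℝ => Real.exp (-y ^ 2 / 2)) (-x * Real.exp (-x ^ 2 / 2)) x := by
  have h1 : HasDerivAt (fun y : ℝ => -y ^ 2 / 2) (-x) x := by
    have := ((hasDerivAt_pow 2 x).neg).div_const 2
    simpa using this.congr_deriv (by ring)
  simpa [mul_comm] using h1.exp

lemma hasDerivAt_g (x : ℝ) :
    HasDerivAt gfun (Real.exp (-x ^ 2 / 2) * kfun x) x := by
  have h := (((hasDerivAt_E x).pow 2).add (hasDerivAt_exp_part x)).sub_const 1
  have heq : (2 : ℕ) * Efun x ^ (2-1) * (2 * stdGaussianPDF x) + (-x * Real.exp (-x^2/2))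
      = Real.exp (-x ^ 2 / 2) * kfun x := by
    rw [kfun, stdGaussianPDF]
    field_simp
    ring
  rw [← heq]
  exact h

lemma deriv_kfun : deriv kfun = fun x => 4 / Real.pi * Real.exp (-x ^ 2 / 2) - 1 := by
  funext x; exact (hasDerivAt_k x).deriv

lemma concave_kfun : ConcaveOn ℝ (Set.Ici (0:ℝ)) kfun := by
  apply AntitoneOn.concaveOn_of_deriv (convex_Ici 0)
  · exact fun x _ => (hasDerivAt_k x).continuousAt.continuousWithinAt
  · exact fun x _ => (hasDerivAt_k x).differentiableAt.differentiableWithinAt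
  · rw [deriv_kfun, interior_Ici]
    intro a ha b hb hab
    have h1 : Real.exp (-b ^ 2 / 2) ≤ Real.exp (-a ^ 2 / 2) := by
      apply Real.exp_le_exp.2
      have : a ^ 2 ≤ b ^ 2 := by nlinarith [le_of_lt (Set.mem_Ioi.1 ha)]
      linarith
    have hpi : 0 < 4 / Real.pi := by positivity
    nlinarith

lemma kfun_nonneg_of {x y : ℝ} (hy : 0 ≤ y) (hyx : y ≤ x) (hk : 0 ≤ kfun x) : 0 ≤ kfun y := by
  rcases eq_or_lt_of_le (hy.trans hyx) with h | hx
  · -- x = 0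
    have : y = 0 := le_antisymm (hyx.trans h.symm.le) hy
    rw [this, kfun_zero]
  · have hxpos : (0:ℝ) < x := hx
    have h2 := concave_kfun.2 (Set.mem_Ici.2 le_rfl) (Set.mem_Ici.2 hxpos.le)
      (show (0:ℝ) ≤ 1 - y/x from by
        have : y/x ≤ 1 := div_le_one_of_le₀ hyx hxpos.le
        linarith) (show (0:ℝ) ≤ y/x from by positivity)
      (show (1 - y/x) + y/x = 1 from by ring)
    have h3 : (1 - y/x) • (0:ℝ) + (y/x) • x = y := by
      field_simp
      simp [hxpos.ne']
    rw [h3, kfun_zero] at h2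
    have : 0 ≤ (y/x) * kfun x := mul_nonneg (by positivity) hk
    rw [smul_eq_mul, smul_eq_mul] at h2
    linarith

lemma kfun_nonpos_of {x y : ℝ} (hx : 0 ≤ x) (hxy : x ≤ y) (hk : kfun x < 0) : kfun y ≤ 0 := by
  have hxpos : (0:ℝ) < x := by
    rcases eq_or_lt_of_le hx with h | h
    · exfalso; rw [← h, kfun_zero] at hk; exact lt_irrefl 0 hk
    · exact h
  rcases eq_or_lt_of_le hxy with h | hy
  · rw [← h]; exact hk.le
  · have hypos : (0:ℝ) < y := hxpos.trans hy
    have h2 := concave_kfun.2 (Set.mem_Ici.2 le_rfl) (Set.mem_Ici.2 hypos.le)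
      (show (0:ℝ) ≤ 1 - x/y from by
        have : x/y ≤ 1 := div_le_one_of_le₀ hxy hypos.le
        linarith) (show (0:ℝ) ≤ x/y from by positivity)
      (show (1 - x/y) + x/y = 1 from by ring)
    have h3 : (1 - x/y) • (0:ℝ) + (x/y) • y = x := by field_simp; simp [hypos.ne']
    rw [h3, kfun_zero] at h2
    rw [smul_eq_mul, smul_eq_mul] at h2
    -- kfun x ≥ (x/y) * kfun y, kfun x < 0, x/y > 0 ⇒ kfun y < 0
    by_contra hpos
    push_neg at hpos
    have : 0 ≤ (x/y) * kfun y := mul_nonneg (by positivity) hpos.le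
    linarith

lemma tendsto_gfun : Tendsto gfun atTop (𝓝 0) := by
  have hE : Tendsto Efun atTop (𝓝 1) := by
    have := (tendsto_cdf.const_mul 2).sub_const 1
    norm_num at this
    exact this
  have hE2 : Tendsto (fun x => Efun x ^ 2) atTop (𝓝 1) := by
    simpa using hE.pow 2
  have hexp : Tendsto (fun x : ℝ => Real.exp (-x ^ 2 / 2)) atTop (𝓝 0) := by
    apply Real.tendsto_exp_atBot.comp
    apply Filter.Tendsto.atBot_div_const (by norm_num : (0:ℝ) < 2)
    exact tendsto_neg_atBot_iff.2 (tendsto_pow_atTop (by norm_num))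
  have := (hE2.add hexp).sub_const 1
  norm_num at this
  exact this

lemma gfun_nonneg_of_nonneg {x : ℝ} (hx : 0 ≤ x) : 0 ≤ gfun x := by
  by_cases hk : 0 ≤ kfun x
  · -- gfun monotone on [0, x]
    have hmono : MonotoneOn gfun (Set.Icc 0 x) := by
      apply monotoneOn_of_deriv_nonneg (convex_Icc 0 x)
      · exact fun y _ => (hasDerivAt_g y).continuousAt.continuousWithinAt
      · intro y hy
        exact (hasDerivAt_g y).differentiableAt.differentiableWithinAt
      · intro y hy
        rw [interior_Icc] at hy
        rw [(hasDerivAt_g y).deriv]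
        exact mul_nonneg (Real.exp_pos _).le
          (kfun_nonneg_of hy.1.le hy.2.le hk)
    have := hmono (Set.mem_Icc.2 ⟨le_rfl, hx⟩) (Set.mem_Icc.2 ⟨hx, le_rfl⟩) hx
    rwa [gfun_zero] at this
  · push_neg at hk
    have hanti : AntitoneOn gfun (Set.Ici x) := by
      apply antitoneOn_of_deriv_nonpos (convex_Ici x)
      · exact fun y _ => (hasDerivAt_g y).continuousAt.continuousWithinAt
      · intro y hy
        exact (hasDerivAt_g y).differentiableAt.differentiableWithinAt
      · intro y hy
        rw [interior_Ici] at hy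
        rw [(hasDerivAt_g y).deriv]
        exact mul_nonpos_of_nonneg_of_nonpos (Real.exp_pos _).le
          (kfun_nonpos_of hx (le_of_lt hy) hk)
    have hev : ∀ᶠ y in atTop, gfun y ≤ gfun x := by
      filter_upwards [eventually_ge_atTop x] with y hy
      exact hanti (Set.mem_Ici.2 le_rfl) (Set.mem_Ici.2 hy) hy
    exact le_of_tendsto tendsto_gfun hev

lemma key_ineq (x : ℝ) : 1 - Real.exp (-x ^ 2 / 2) ≤ Efun x ^ 2 := by
  rcases le_or_gt 0 x with hx | hx
  · have := gfun_nonneg_of_nonneg hx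
    rw [gfun] at this; linarith
  · have h := gfun_nonneg_of_nonneg (by linarith : (0:ℝ) ≤ -x)
    rw [gfun] at h
    have hE : Efun (-x) = - Efun x := by
      rw [Efun, Efun, cdf_neg]; ring
    have hsq2 : Efun (-x) ^ 2 = Efun x ^ 2 := by rw [hE]; ring
    rw [hsq2, show (-x)^2 = x^2 from by ring] at h
    linarith

/-- For every real `x`, `φ(x) ≥ (4/√(2π)) · Φ(x) · (1 − Φ(x))`. -/
theorem stmt0 (x : ℝ) :
    stdGaussianPDF x ≥
      (4 / Real.sqrt (2 * Real.pi)) * stdGaussianCDF x * (1 - stdGaussianCDF x) := by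
  rw [ge_iff_le]
  have hs : (0:ℝ) < Real.sqrt (2 * Real.pi) := Real.sqrt_pos.2 (by positivity)
  have key := key_ineq x
  have h4 : (4 / Real.sqrt (2 * Real.pi)) * stdGaussianCDF x * (1 - stdGaussianCDF x)
      = (1 - Efun x ^ 2) / Real.sqrt (2 * Real.pi) := by
    rw [Efun]; field_simp; ring
  rw [h4, stdGaussianPDF]
  gcongr
  linarith
end

section
/- Let H be a Hilbert space, P an orthogonal projection on H, and K a bounded self-adjoint operator with KP = PK = P and ‖K‖ ≤ 1. If ‖K − P‖ ≤ λ < 1, then for every f ∈ H, ‖(P − K)f‖ ≤ (λ/(1−λ)) ‖(I − K)f‖. -/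
open ContinuousLinearMap

/-- If `P` is an orthogonal projection on a Hilbert space `H`, and `K` is a bounded
self-adjoint operator with `KP = PK = P`, `‖K‖ ≤ 1` and `‖K − P‖ ≤ λ < 1`, then
for every `f ∈ H`, `‖(P − K)f‖ ≤ (λ/(1−λ))‖(I − K)f‖`. -/
theorem stmt3 {H : Type*} [NormedAddCommGroup H] [InnerProductSpace ℝ H] [CompleteSpace H]
    (P K : H →L[ℝ] H) (hPsa : IsSelfAdjoint P) (hPidem : P ∘L P = P)
    (hKsa : IsSelfAdjoint K) (hKnorm : ‖K‖ ≤ 1)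
    (hKP : K ∘L P = P) (hPK : P ∘L K = P)
    (lam : ℝ) (hlam : lam < 1) (hdiff : ‖K - P‖ ≤ lam) (f : H) :
    ‖(P - K) f‖ ≤ (lam / (1 - lam)) * ‖((1 : H →L[ℝ] H) - K) f‖ := by
  have hlam0 : 0 ≤ lam := le_trans (norm_nonneg _) hdiff
  have h1lam : (0 : ℝ) < 1 - lam := by linarith
  set g := f - P f with hg
  have hPPf : P (P f) = P f := by rw [← ContinuousLinearMap.comp_apply, hPidem]
  have hKPf : K (P f) = P f := by rw [← ContinuousLinearMap.comp_apply, hKP]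
  have hPg : P g = 0 := by simp [hg, map_sub, hPPf]
  have h1 : (P - K) f = -(K g) := by
    simp only [ContinuousLinearMap.sub_apply, hg, map_sub, hKPf]
    abel
  have h2 : ((1 : H →L[ℝ] H) - K) f = g - K g := by
    simp only [ContinuousLinearMap.sub_apply, ContinuousLinearMap.one_apply, hg, map_sub, hKPf]
    abel
  have hKg : ‖K g‖ ≤ lam * ‖g‖ := by
    have : K g = (K - P) g := by simp [ContinuousLinearMap.sub_apply, hPg]
    rw [this]
    calc ‖(K - P) g‖ ≤ ‖K - P‖ * ‖g‖ := le_opNorm _ _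
      _ ≤ lam * ‖g‖ := by gcongr
  have hlow : (1 - lam) * ‖g‖ ≤ ‖g - K g‖ := by
    have := norm_sub_norm_le g (K g)
    have h := norm_sub_le g (K g)
    nlinarith [norm_sub_norm_le g (K g)]
  rw [h1, h2, norm_neg]
  calc ‖K g‖ ≤ lam * ‖g‖ := hKg
    _ = (lam / (1 - lam)) * ((1 - lam) * ‖g‖) := by field_simp
    _ ≤ (lam / (1 - lam)) * ‖g - K g‖ := by
        apply mul_le_mul_of_nonneg_left hlow (div_nonneg hlam0 h1lam.le)
end

section
/- Let K be a bounded self-adjoint operator on a Hilbert space with spectrum contained in [−λ, 1] for some λ ∈ (0,1). Then for every f in the space, ‖(I − K)f‖² + ((1+λ)/(1−λ))‖Kf‖² ≤ ((1+λ)/(1−λ))‖f‖². -/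
/-!
The norm of a self-adjoint operator equals its spectral radius, so centring `K` at the midpoint
of `[m, M]` gives `‖K - (m + M)/2‖ ≤ (M - m)/2`. Squaring this yields
`‖K f‖² - (m + M)⟪K f, f⟫ + m M ‖f‖² ≤ 0`, i.e. `⟪(K - m)(K - M) f, f⟫ ≤ 0`. For `m = -λ`, `M = 1`
the claim is this inequality multiplied by `1 + a = 2 / (1 - λ)`, where `a = (1 + λ)/(1 - λ)`, as
`(1 - t)² + a t² - a = (1 + a)(t + λ)(t - 1)`.
-/

open scoped RealInnerProductSpace

theorem IsSelfAdjoint.norm_le_of_forall_mem_spectrum {𝕜 E : Type*} [RCLike 𝕜]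
    [NormedAddCommGroup E] [InnerProductSpace 𝕜 E] [CompleteSpace E]
    {T : E →L[𝕜] E} (hT : IsSelfAdjoint T) {r : ℝ} (hr : 0 ≤ r)
    (h : ∀ z ∈ spectrum 𝕜 T, ‖z‖ ≤ r) : ‖T‖ ≤ r := by
  have : spectralRadius 𝕜 T ≤ r.toNNReal :=
    iSup₂_le fun z hz ↦ ENNReal.coe_le_coe.mpr ((Real.le_toNNReal_iff_coe_le hr).mpr (h z hz))
  rw [T.spectralRadius_eq_nnnorm hT, ENNReal.coe_le_coe, Real.le_toNNReal_iff_coe_le hr] at this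
  exact this

theorem IsSelfAdjoint.norm_sub_smul_one_le_of_spectrum_subset_Icc {E : Type*}
    [NormedAddCommGroup E] [InnerProductSpace ℝ E] [CompleteSpace E]
    {K : E →L[ℝ] E} (hK : IsSelfAdjoint K) {m M : ℝ} (hmM : m ≤ M)
    (h : spectrum ℝ K ⊆ Set.Icc m M) :
    ‖K - ((m + M) / 2) • (1 : E →L[ℝ] E)‖ ≤ (M - m) / 2 := by
  rw [← Algebra.algebraMap_eq_smul_one]
  refine (hK.sub (.algebraMap _ (.all _))).norm_le_of_forall_mem_spectrum (by linarith) ?_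
  rw [← spectrum.sub_singleton_eq]
  rintro _ ⟨z, hz, _, rfl, rfl⟩
  obtain ⟨hmz, hzM⟩ := h hz
  rw [Real.norm_eq_abs, abs_le]
  constructor <;> linarith

theorem IsSelfAdjoint.norm_sq_apply_add_le_of_spectrum_subset_Icc {E : Type*}
    [NormedAddCommGroup E] [InnerProductSpace ℝ E] [CompleteSpace E]
    {K : E →L[ℝ] E} (hK : IsSelfAdjoint K) {m M : ℝ} (hmM : m ≤ M)
    (h : spectrum ℝ K ⊆ Set.Icc m M) (x : E) :
    ‖K x‖ ^ 2 + m * M * ‖x‖ ^ 2 ≤ (m + M) * ⟪K x, x⟫ := by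
  have hx : ‖K x - ((m + M) / 2) • x‖ ≤ (M - m) / 2 * ‖x‖ := by
    simpa using (K - ((m + M) / 2) • (1 : E →L[ℝ] E)).le_of_opNorm_le
      (hK.norm_sub_smul_one_le_of_spectrum_subset_Icc hmM h) x
  have hsq := pow_le_pow_left₀ (norm_nonneg _) hx 2
  rw [norm_sub_sq_real, norm_smul, real_inner_smul_right, Real.norm_eq_abs] at hsq
  nlinarith [sq_abs ((m + M) / 2)]

/-- If `K` is a bounded self-adjoint operator on a Hilbert space with spectrum contained
in `[−λ, 1]` for some `λ ∈ (0,1)`, then for every `f`,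
`‖(I − K)f‖² + ((1+λ)/(1−λ))‖Kf‖² ≤ ((1+λ)/(1−λ))‖f‖²`. -/
theorem stmt4 {H : Type*} [NormedAddCommGroup H] [InnerProductSpace ℝ H] [CompleteSpace H]
    (K : H →L[ℝ] H) (hKsa : IsSelfAdjoint K)
    (lam : ℝ) (hlam : lam ∈ Set.Ioo (0 : ℝ) 1)
    (hspec : spectrum ℝ K ⊆ Set.Icc (-lam) 1) (f : H) :
    ‖((1 : H →L[ℝ] H) - K) f‖ ^ 2 + ((1 + lam) / (1 - lam)) * ‖K f‖ ^ 2
      ≤ ((1 + lam) / (1 - lam)) * ‖f‖ ^ 2 := by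
  obtain ⟨hlam0, hlam1⟩ := hlam
  have hKf := hKsa.norm_sq_apply_add_le_of_spectrum_subset_Icc (by linarith) hspec f
  have hexpand : ‖((1 : H →L[ℝ] H) - K) f‖ ^ 2 = ‖f‖ ^ 2 - 2 * ⟪K f, f⟫ + ‖K f‖ ^ 2 := by
    rw [sub_apply, one_apply_eq_self, norm_sub_sq_real, real_inner_comm]
  rw [hexpand, ← sub_nonneg]
  have hpos : 0 < 1 - lam := by linarith
  field_simp
  nlinarith
end

section
/- Let P be an orthogonal projection on a Hilbert space H and K a self-adjoint contraction with KP = PK = P and ‖K − P‖ ≤ λ < 1. Then for every f ∈ H, ‖Kf − f‖² ≥ −(1−λ)⟨f, Kf − f⟩. -/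
open ContinuousLinearMap

/-- If `P` is an orthogonal projection and `K` a self-adjoint contraction on a Hilbert
space with `KP = PK = P` and `‖K − P‖ ≤ λ < 1`, then for every `f`,
`‖Kf − f‖² ≥ −(1−λ)⟨f, Kf − f⟩`. -/
theorem stmt5 {H : Type*} [NormedAddCommGroup H] [InnerProductSpace ℝ H] [CompleteSpace H]
    (P K : H →L[ℝ] H) (hPsa : IsSelfAdjoint P) (hPidem : P ∘L P = P)
    (hKsa : IsSelfAdjoint K) (hKnorm : ‖K‖ ≤ 1)
    (hKP : K ∘L P = P) (hPK : P ∘L K = P)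
    (lam : ℝ) (hlam : lam < 1) (hdiff : ‖K - P‖ ≤ lam) (f : H) :
    ‖K f - f‖ ^ 2 ≥ -(1 - lam) * (inner ℝ f (K f - f) : ℝ) := by
  set g : H := f - P f with hg
  set u : H := (K - P) g with hu
  have hPP : ∀ x, P (P x) = P x := fun x =>
    congrArg (fun T : H →L[ℝ] H => T x) hPidem
  have hKPa : ∀ x, K (P x) = P x := fun x =>
    congrArg (fun T : H →L[ℝ] H => T x) hKP
  have hPKa : ∀ x, P (K x) = P x := fun x =>
    congrArg (fun T : H →L[ℝ] H => T x) hPK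
  have hPg : P g = 0 := by simp [hg, map_sub, hPP]
  have huval : u = K f - P f := by
    simp [hu, hg, map_sub, hKPa, hPP]
  have hKey : K f - f = u - g := by rw [huval, hg]; abel
  have hPu : P u = 0 := by rw [huval]; simp [map_sub, hPKa, hPP]
  -- replace inner ℝ f with inner ℝ g
  have hinner : (inner ℝ f (K f - f) : ℝ) = inner ℝ g (K f - f) := by
    have h1 : (inner ℝ (P f) (K f - f) : ℝ) = inner ℝ f (P (K f - f)) :=
      hPsa.isSymmetric f (K f - f)
    have h2 : P (K f - f) = 0 := by rw [hKey, map_sub, hPu, hPg, sub_zero]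
    have : (inner ℝ f g : ℝ) = inner ℝ f f - inner ℝ f (P f) := by
      rw [hg, inner_sub_right]
    calc (inner ℝ f (K f - f) : ℝ)
        = inner ℝ (P f) (K f - f) + inner ℝ g (K f - f) := by
          rw [← inner_add_left]; congr 1; rw [hg]; abel
      _ = inner ℝ g (K f - f) := by rw [h1, h2, inner_zero_right, zero_add]
  set a : ℝ := inner ℝ g u with ha
  have hginner : (inner ℝ g (K f - f) : ℝ) = a - ‖g‖ ^ 2 := by
    rw [hKey, inner_sub_right, ha, real_inner_self_eq_norm_sq]
  have hlam0 : 0 ≤ lam := le_trans (norm_nonneg _) hdiff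
  have hu_norm : ‖u‖ ≤ lam * ‖g‖ := by
    calc ‖u‖ ≤ ‖K - P‖ * ‖g‖ := (K - P).le_opNorm g
      _ ≤ lam * ‖g‖ := by
          apply mul_le_mul_of_nonneg_right hdiff (norm_nonneg _)
  have ha_le : a ≤ lam * ‖g‖ ^ 2 := by
    calc a ≤ ‖g‖ * ‖u‖ := real_inner_le_norm g u
      _ ≤ ‖g‖ * (lam * ‖g‖) := mul_le_mul_of_nonneg_left hu_norm (norm_nonneg _)
      _ = lam * ‖g‖ ^ 2 := by ring
  have hnorm1 : ‖K f - f‖ ^ 2 = ‖u‖ ^ 2 - 2 * a + ‖g‖ ^ 2 := by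
    have h := real_inner_comm u g
    rw [hKey, ← real_inner_self_eq_norm_sq, inner_sub_sub_self,
      real_inner_self_eq_norm_sq, real_inner_self_eq_norm_sq, ← h, ← ha]
    ring
  have hsq : 0 ≤ ‖lam • g - u‖ ^ 2 := sq_nonneg _
  have hsq' : ‖lam • g - u‖ ^ 2 = lam ^ 2 * ‖g‖ ^ 2 - 2 * lam * a + ‖u‖ ^ 2 := by
    have h := real_inner_comm u g
    rw [← real_inner_self_eq_norm_sq, inner_sub_sub_self]
    simp only [real_inner_smul_left, real_inner_smul_right, ← h,
      real_inner_self_eq_norm_sq, norm_smul, Real.norm_eq_abs, mul_pow, sq_abs, ← ha]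
    ring
  rw [hinner, hginner, hnorm1]
  nlinarith [hsq, hsq', ha_le]
end

section
/- Solidarity from random-scan to deterministic-scan: let K₁,…,K_d be self-adjoint Markov contraction operators on L²(Π), each satisfying K_jP_j = P_jK_j = P_j for orthogonal projections P_j with ‖K_j − P_j‖ ≤ λ₀ < 1. Let P_RCW = (1/d)Σⱼ K_j and P_DCW = K_d⋯K₁, and let Π also denote the rank-one projection onto constants satisfying ΠK_j = K_jΠ = Π for all j. If ‖P_RCW − Π‖ ≤ 1 − η for some η ∈ (0,1], then ‖P_DCW − Π‖ ≤ 1 − (1−λ₀)²·η/(8(d+1)(1+λ₀)). -/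
/-!
Run the deterministic scan on a vector `h` with `Π h = 0`: `x₀ = h`, `x_{i+1} = K_{i+1} x_i`, and
let `e_i = ⟪x_i - x_{i+1}, x_i⟫` be the Dirichlet form of `K_{i+1}` at `x_i`.
Since `‖K_j - P_j‖ ≤ λ₀`, each update loses at least `(1 - λ₀) e_i` of squared norm, so
`‖P_DCW h‖² + (1 - λ₀) ∑ e_i ≤ ‖h‖²`. On the other hand `‖x_i - x_{i+1}‖² ≤ 2 e_i`, so by
Cauchy–Schwarz `x_i` stays within `√(2 i ∑ e)` of `h`, and the Dirichlet forms of all `K_j`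
at `h` add up to at most `4 d² ∑ e`. The random-scan gap bounds that sum from below by
`d η ‖h‖²`, hence `∑ e ≥ η ‖h‖² / (4 d)` and `‖P_DCW h‖ ≤ (1 - (1 - λ₀) η / (8 d)) ‖h‖`.
-/

open ContinuousLinearMap Finset
open scoped RealInnerProductSpace

section DirichletForm

variable {E : Type*} [NormedAddCommGroup E] [InnerProductSpace ℝ E]

def dirichletForm (K : E →L[ℝ] E) (x : E) : ℝ := ⟪x - K x, x⟫

variable {K : E →L[ℝ] E}

lemma dirichletForm_eq (K : E →L[ℝ] E) (x : E) : dirichletForm K x = ‖x‖ ^ 2 - ⟪K x, x⟫ := by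
  rw [dirichletForm, inner_sub_left, real_inner_self_eq_norm_sq]

lemma dirichletForm_add_add_dirichletForm_sub (K : E →L[ℝ] E) (x w : E) :
    dirichletForm K (x + w) + dirichletForm K (x - w) =
      2 * dirichletForm K x + 2 * dirichletForm K w := by
  simp only [dirichletForm_eq, map_add, map_sub, norm_add_sq_real, norm_sub_sq_real, inner_add_left,
    inner_add_right, inner_sub_left, inner_sub_right]
  ring

lemma norm_sub_apply_sq_le (hK : ‖K‖ ≤ 1) (x : E) : ‖x - K x‖ ^ 2 ≤ 2 * dirichletForm K x := by
  have hKx : ‖K x‖ ≤ ‖x‖ := (K.le_of_opNorm_le hK x).trans_eq (one_mul _)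
  rw [dirichletForm_eq, norm_sub_sq_real, real_inner_comm]
  nlinarith [norm_nonneg (K x)]

lemma dirichletForm_nonneg (hK : ‖K‖ ≤ 1) (x : E) : 0 ≤ dirichletForm K x := by
  nlinarith [norm_sub_apply_sq_le hK x, sq_nonneg ‖x - K x‖]

lemma dirichletForm_le (hK : ‖K‖ ≤ 1) (x : E) : dirichletForm K x ≤ 2 * ‖x‖ ^ 2 := by
  have hKx : ‖K x‖ ≤ ‖x‖ := (K.le_of_opNorm_le hK x).trans_eq (one_mul _)
  have hinner : -(‖K x‖ * ‖x‖) ≤ ⟪K x, x⟫ := (abs_le.mp (abs_real_inner_le_norm _ _)).1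
  rw [dirichletForm_eq]
  nlinarith [norm_nonneg x]

lemma dirichletForm_add_le (hK : ‖K‖ ≤ 1) (x w : E) :
    dirichletForm K (x + w) ≤ 2 * dirichletForm K x + 4 * ‖w‖ ^ 2 := by
  linarith [dirichletForm_add_add_dirichletForm_sub K x w, dirichletForm_nonneg hK (x - w),
    dirichletForm_le hK w]

lemma norm_apply_sq_le_of_opNorm_le {R : E →L[ℝ] E} {lam : ℝ} (hR : ‖R‖ ≤ lam) (hlam : lam ≤ 1)
    (v : E) : ‖R v‖ ^ 2 ≤ lam * ‖v‖ ^ 2 + (1 - lam) * ⟪R v, v⟫ := by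
  have hRv : ‖R v‖ ≤ lam * ‖v‖ := R.le_of_opNorm_le hR v
  have hinner : -(‖R v‖ * ‖v‖) ≤ ⟪R v, v⟫ := (abs_le.mp (abs_real_inner_le_norm _ _)).1
  nlinarith [mul_le_mul_of_nonneg_left hinner (sub_nonneg.2 hlam),
    mul_nonneg (sub_nonneg.2 hRv) (add_nonneg (norm_nonneg (R v)) (norm_nonneg v))]

end DirichletForm

lemma norm_sub_sq_le_mul_sum_norm_sub_sq {G : Type*} [SeminormedAddCommGroup G] (x : ℕ → G)
    (n : ℕ) : ‖x 0 - x n‖ ^ 2 ≤ n * ∑ i ∈ range n, ‖x i - x (i + 1)‖ ^ 2 := by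
  have hpath : ‖x 0 - x n‖ ≤ ∑ i ∈ range n, ‖x i - x (i + 1)‖ := by
    simpa only [dist_eq_norm] using dist_le_range_sum_dist x n
  calc ‖x 0 - x n‖ ^ 2 ≤ (∑ i ∈ range n, ‖x i - x (i + 1)‖) ^ 2 := by gcongr
    _ ≤ n * ∑ i ∈ range n, ‖x i - x (i + 1)‖ ^ 2 := by
      simpa using sq_sum_le_card_mul_sum_sq (s := range n) (f := fun i ↦ ‖x i - x (i + 1)‖)

section Scan

variable {M : Type*} [Monoid M]

lemma List.prod_mul_eq_of_forall_mul_eq {p : M} :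
    ∀ {l : List M}, (∀ a ∈ l, a * p = p) → l.prod * p = p
  | [], _ => one_mul p
  | a :: l, h => by
    rw [List.prod_cons, mul_assoc, List.prod_mul_eq_of_forall_mul_eq fun b hb ↦ h b (by simp [hb]),
      h a (by simp)]

-- `partialScan K n = K (n - 1) * ⋯ * K 0`.
def partialScan {d : ℕ} (K : Fin d → M) (n : ℕ) : M := ((List.ofFn K).take n).reverse.prod

@[simp] lemma partialScan_zero {d : ℕ} (K : Fin d → M) : partialScan K 0 = 1 := by
  simp [partialScan]

lemma partialScan_succ {d : ℕ} (K : Fin d → M) (i : Fin d) :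
    partialScan K (i + 1) = K i * partialScan K i := by
  have hi : (i : ℕ) < (List.ofFn K).length := by simp
  rw [partialScan, partialScan, ← List.take_concat_get' _ _ hi]
  simp

lemma partialScan_self {d : ℕ} (K : Fin d → M) : partialScan K d = (List.ofFn K).reverse.prod := by
  rw [partialScan, List.take_of_length_le (by simp)]

end Scan

section NearProjection

variable {E : Type*} [NormedAddCommGroup E] [InnerProductSpace ℝ E] [CompleteSpace E]

-- `K` fixes `P g` and acts as `K - P` on `g - P g`; `P` kills both `g - P g` and the range of
-- `K - P`, so all cross terms vanish.
lemma norm_apply_sq_le_sub_dirichletForm {K P : E →L[ℝ] E} {lam : ℝ} (hP : IsStarProjection P)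
    (hKP : K ∘L P = P) (hPK : P ∘L K = P) (hdiff : ‖K - P‖ ≤ lam) (hlam : lam ≤ 1) (g : E) :
    ‖K g‖ ^ 2 ≤ ‖g‖ ^ 2 - (1 - lam) * dirichletForm K g := by
  set u := P g
  set v := g - P g
  have hguv : g = u + v := (add_sub_cancel u g).symm
  have hPP (y : E) : P (P y) = P y := congr($(hP.isIdempotentElem) y)
  have hPv : P v = 0 := by simp [v, hPP]
  have hPR (w : E) : P ((K - P) w) = 0 := by
    simp [← comp_apply P K, hPK, hPP]
  have hKg : K g = u + (K - P) v := by
    have hKu : K u = u := congr($hKP g)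
    rw [hguv, map_add, hKu, sub_apply, hPv, sub_zero]
  have horth (w : E) (hw : P w = 0) : ⟪u, w⟫ = 0 := by
    simpa [hw] using hP.isSelfAdjoint.isSymmetric g w
  have hg : ‖g‖ ^ 2 = ‖u‖ ^ 2 + ‖v‖ ^ 2 := by
    rw [hguv, norm_add_sq_real, horth v hPv]; ring
  have hKg2 : ‖K g‖ ^ 2 = ‖u‖ ^ 2 + ‖(K - P) v‖ ^ 2 := by
    rw [hKg, norm_add_sq_real, horth _ (hPR v)]; ring
  have hq : dirichletForm K g = ‖v‖ ^ 2 - ⟪(K - P) v, v⟫ := by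
    have hsub : g - K g = v - (K - P) v := by rw [hKg]; nth_rewrite 1 [hguv]; abel
    have hu : ⟪v - (K - P) v, u⟫ = 0 := by
      rw [real_inner_comm]; exact horth _ (by rw [map_sub, hPv, hPR, sub_zero])
    rw [dirichletForm, hsub, hguv, inner_add_right, hu, zero_add, inner_sub_left,
      real_inner_self_eq_norm_sq]
  rw [hKg2, hg, hq]
  linarith [norm_apply_sq_le_of_opNorm_le hdiff hlam v]

end NearProjection

section Trajectory

variable {E : Type*} [NormedAddCommGroup E] [InnerProductSpace ℝ E]

def dissipation (x : ℕ → E) (n : ℕ) : ℝ := ∑ i ∈ range n, ⟪x i - x (i + 1), x i⟫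

variable {d : ℕ} {K : Fin d → E →L[ℝ] E} {x : ℕ → E}

lemma dirichletForm_eq_inner_step (hx : ∀ i : Fin d, x (i + 1) = K i (x i)) (i : Fin d) :
    dirichletForm (K i) (x i) = ⟪x i - x (i + 1), x i⟫ := by
  rw [dirichletForm, hx]

lemma inner_step_nonneg (hx : ∀ i : Fin d, x (i + 1) = K i (x i)) (hK : ∀ i, ‖K i‖ ≤ 1)
    {i : ℕ} (hi : i < d) : 0 ≤ ⟪x i - x (i + 1), x i⟫ := by
  simpa [dirichletForm_eq_inner_step hx ⟨i, hi⟩] using dirichletForm_nonneg (hK ⟨i, hi⟩) (x i)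

lemma inner_step_le_dissipation (hx : ∀ i : Fin d, x (i + 1) = K i (x i))
    (hK : ∀ i, ‖K i‖ ≤ 1) {n : ℕ} (hn : n ≤ d) :
    ∑ i ∈ range n, ⟪x i - x (i + 1), x i⟫ ≤ dissipation x d :=
  sum_le_sum_of_subset_of_nonneg (range_subset_range.2 hn) fun _ hi _ ↦
    inner_step_nonneg hx hK (mem_range.1 hi)

lemma norm_sub_sq_le_dissipation (hx : ∀ i : Fin d, x (i + 1) = K i (x i))
    (hK : ∀ i, ‖K i‖ ≤ 1) {n : ℕ} (hn : n ≤ d) :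
    ‖x 0 - x n‖ ^ 2 ≤ 2 * n * dissipation x d := by
  have hstep : ∀ i ∈ range n, ‖x i - x (i + 1)‖ ^ 2 ≤ 2 * ⟪x i - x (i + 1), x i⟫ := fun i hi ↦ by
    have hi : i < d := (mem_range.1 hi).trans_le hn
    simpa [hx ⟨i, hi⟩, dirichletForm_eq_inner_step hx ⟨i, hi⟩] using
      norm_sub_apply_sq_le (hK ⟨i, hi⟩) (x i)
  calc ‖x 0 - x n‖ ^ 2 ≤ n * ∑ i ∈ range n, ‖x i - x (i + 1)‖ ^ 2 :=
        norm_sub_sq_le_mul_sum_norm_sub_sq x n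
    _ ≤ n * (2 * ∑ i ∈ range n, ⟪x i - x (i + 1), x i⟫) := by
        gcongr
        rw [mul_sum]
        exact sum_le_sum hstep
    _ ≤ n * (2 * dissipation x d) := by
        have := inner_step_le_dissipation hx hK hn
        gcongr
    _ = 2 * n * dissipation x d := by ring

lemma dirichletForm_start_le (hx : ∀ i : Fin d, x (i + 1) = K i (x i)) (hK : ∀ i, ‖K i‖ ≤ 1)
    (i : Fin d) : dirichletForm (K i) (x 0) ≤ 4 * (2 * i + 1) * dissipation x d := by
  have hsplit := dirichletForm_add_le (hK i) (x i) (x 0 - x i)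
  rw [add_sub_cancel] at hsplit
  have hstep : dirichletForm (K i) (x i) ≤ dissipation x d := by
    rw [dirichletForm_eq_inner_step hx i]
    exact single_le_sum (fun j hj ↦ inner_step_nonneg hx hK (mem_range.1 hj)) (mem_range.2 i.isLt)
  have hdist := norm_sub_sq_le_dissipation hx hK i.isLt.le
  have hdiss_nonneg : 0 ≤ dissipation x d := (dirichletForm_nonneg (hK i) _).trans hstep
  nlinarith

lemma sum_dirichletForm_start_le (hx : ∀ i : Fin d, x (i + 1) = K i (x i)) (hK : ∀ i, ‖K i‖ ≤ 1) :
    ∑ i, dirichletForm (K i) (x 0) ≤ 4 * d ^ 2 * dissipation x d := by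
  have hodd : ∀ n : ℕ, ∑ i ∈ range n, (2 * (i : ℝ) + 1) = n ^ 2 := fun n ↦ by
    induction n with
    | zero => simp
    | succ n ih => rw [sum_range_succ, ih]; push_cast; ring
  calc ∑ i, dirichletForm (K i) (x 0) ≤ ∑ i : Fin d, 4 * (2 * (i : ℝ) + 1) * dissipation x d :=
        sum_le_sum fun i _ ↦ dirichletForm_start_le hx hK i
    _ = 4 * d ^ 2 * dissipation x d := by
        rw [Fin.sum_univ_eq_sum_range (fun i ↦ 4 * (2 * (i : ℝ) + 1) * dissipation x d), ← sum_mul,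
          ← mul_sum, hodd]

lemma norm_sq_add_mul_dissipation_le [CompleteSpace E] {P : Fin d → E →L[ℝ] E} {lam : ℝ}
    (hx : ∀ i : Fin d, x (i + 1) = K i (x i)) (hP : ∀ i, IsStarProjection (P i))
    (hKP : ∀ i, K i ∘L P i = P i) (hPK : ∀ i, P i ∘L K i = P i)
    (hdiff : ∀ i, ‖K i - P i‖ ≤ lam) (hlam : lam ≤ 1) :
    ‖x d‖ ^ 2 + (1 - lam) * dissipation x d ≤ ‖x 0‖ ^ 2 := by
  have hstep : ∀ i ∈ range d,
      (1 - lam) * ⟪x i - x (i + 1), x i⟫ ≤ ‖x i‖ ^ 2 - ‖x (i + 1)‖ ^ 2 := fun i hi ↦ by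
    have hi : i < d := mem_range.1 hi
    have := norm_apply_sq_le_sub_dirichletForm (hP ⟨i, hi⟩) (hKP _) (hPK _) (hdiff _) hlam (x i)
    rw [dirichletForm_eq_inner_step hx ⟨i, hi⟩, ← hx ⟨i, hi⟩] at this
    linarith
  have := sum_le_sum hstep
  rw [← mul_sum, sum_range_sub' (fun i ↦ ‖x i‖ ^ 2)] at this
  rw [dissipation]
  linarith

end Trajectory

section SpectralGap

variable {E : Type*} [NormedAddCommGroup E] [InnerProductSpace ℝ E]

lemma inner_apply_le_of_opNorm_sub_le {A Pi0 : E →L[ℝ] E} {r : ℝ} (hA : ‖A - Pi0‖ ≤ r) {h : E}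
    (hh : Pi0 h = 0) : ⟪A h, h⟫ ≤ r * ‖h‖ ^ 2 := by
  have hAh : A h = (A - Pi0) h := by rw [sub_apply, hh, sub_zero]
  calc ⟪A h, h⟫ ≤ ‖(A - Pi0) h‖ * ‖h‖ := hAh ▸ real_inner_le_norm _ _
    _ ≤ ‖A - Pi0‖ * ‖h‖ * ‖h‖ := by gcongr; exact le_opNorm _ _
    _ ≤ r * ‖h‖ ^ 2 := by rw [mul_assoc, ← sq]; gcongr

lemma card_mul_norm_sq_le_sum_dirichletForm {ι : Type*} [Fintype ι] [Nonempty ι]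
    (K : ι → E →L[ℝ] E) {Pi0 : E →L[ℝ] E} {η : ℝ}
    (hgap : ‖(Fintype.card ι : ℝ)⁻¹ • ∑ i, K i - Pi0‖ ≤ 1 - η) {h : E} (hh : Pi0 h = 0) :
    Fintype.card ι * η * ‖h‖ ^ 2 ≤ ∑ i, dirichletForm (K i) h := by
  have hn : (0 : ℝ) < Fintype.card ι := by exact_mod_cast Fintype.card_pos
  have hmean := inner_apply_le_of_opNorm_sub_le hgap hh
  have hsum : ∑ i, dirichletForm (K i) h
      = Fintype.card ι * (‖h‖ ^ 2 - ⟪((Fintype.card ι : ℝ)⁻¹ • ∑ i, K i) h, h⟫) := by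
    simp only [dirichletForm_eq, sum_sub_distrib, ← sum_inner, ← _root_.sum_apply, smul_apply,
      real_inner_smul_left, sum_const, card_univ, nsmul_eq_mul]
    field_simp
  rw [hsum]
  nlinarith

end SpectralGap

lemma one_sub_mul_div_le_one {d lam η : ℝ} (hd : 1 ≤ d) (hlam0 : 0 ≤ lam) (hlam1 : lam ≤ 1)
    (hη : η ≤ 1) : (1 - lam) * η / (8 * d) ≤ 1 := by
  rw [div_le_one (by positivity)]
  nlinarith [mul_le_mul_of_nonneg_left hη (sub_nonneg.2 hlam1)]

lemma one_sub_sq_mul_div_le {d lam η : ℝ} (hd : 0 < d) (hlam0 : 0 ≤ lam) (hlam1 : lam ≤ 1)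
    (hη : 0 ≤ η) : (1 - lam) ^ 2 * η / (8 * (d + 1) * (1 + lam)) ≤ (1 - lam) * η / (8 * d) := by
  have hA : 0 ≤ (1 - lam) * η := mul_nonneg (sub_nonneg.2 hlam1) hη
  rw [div_le_div_iff₀ (by positivity) (by positivity)]
  nlinarith [mul_nonneg hA hlam0, mul_nonneg (mul_nonneg hA hlam0) hd.le]

section Assembly

variable {E : Type*} [NormedAddCommGroup E] [InnerProductSpace ℝ E] [CompleteSpace E]

lemma opNorm_sub_le_of_forall_apply_le {L Pi0 : E →L[ℝ] E} (hPi0 : IsStarProjection Pi0)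
    (hLPi0 : L * Pi0 = Pi0) {r : ℝ} (hr : 0 ≤ r) (hL : ∀ h, Pi0 h = 0 → ‖L h‖ ≤ r * ‖h‖) :
    ‖L - Pi0‖ ≤ r := by
  refine opNorm_le_bound _ hr fun f ↦ ?_
  have hsub : (L - Pi0) f = L ((1 - Pi0) f) := by
    rw [← mul_apply_eq_comp, mul_sub, hLPi0, mul_one]
  have hker : Pi0 ((1 - Pi0) f) = 0 := by
    rw [← mul_apply_eq_comp, hPi0.mul_one_sub_self, zero_apply]
  calc ‖(L - Pi0) f‖ = ‖L ((1 - Pi0) f)‖ := by rw [hsub]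
    _ ≤ r * ‖(1 - Pi0) f‖ := hL _ hker
    _ ≤ r * ‖f‖ := by
        gcongr
        exact (le_of_opNorm_le _ hPi0.one_sub.norm_le f).trans_eq (one_mul _)

theorem norm_scan_apply_le {d : ℕ} (hd : 0 < d) {K P : Fin d → E →L[ℝ] E} {Pi0 : E →L[ℝ] E}
    {lam η : ℝ} (hP : ∀ i, IsStarProjection (P i)) (hK : ∀ i, ‖K i‖ ≤ 1)
    (hKP : ∀ i, K i ∘L P i = P i) (hPK : ∀ i, P i ∘L K i = P i)
    (hdiff : ∀ i, ‖K i - P i‖ ≤ lam) (hlam : lam ≤ 1) (hη : η ≤ 1)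
    (hgap : ‖(d : ℝ)⁻¹ • ∑ i, K i - Pi0‖ ≤ 1 - η) {h : E} (hh : Pi0 h = 0) :
    ‖(List.ofFn K).reverse.prod h‖ ≤ (1 - (1 - lam) * η / (8 * d)) * ‖h‖ := by
  set x : ℕ → E := fun n ↦ partialScan K n h
  have hx (i : Fin d) : x (i + 1) = K i (x i) := by simp [x, partialScan_succ]
  have hd1 : (1 : ℝ) ≤ d := by exact_mod_cast hd
  have hlam0 : 0 ≤ lam := (norm_nonneg _).trans (hdiff ⟨0, hd⟩)
  have : Nonempty (Fin d) := ⟨⟨0, hd⟩⟩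
  have hx0 : x 0 = h := by simp [x]
  have hdiss := norm_sq_add_mul_dissipation_le hx hP hKP hPK hdiff hlam
  have hstart := sum_dirichletForm_start_le hx hK
  rw [hx0] at hdiss hstart
  have hgap' : d * η * ‖h‖ ^ 2 ≤ 4 * d ^ 2 * dissipation x d := by
    refine le_trans ?_ hstart
    simpa using card_mul_norm_sq_le_sum_dirichletForm K (by simpa using hgap) hh
  have hc := one_sub_mul_div_le_one hd1 hlam0 hlam hη
  set c := (1 - lam) * η / (8 * d)
  have h8c : 8 * d * c = (1 - lam) * η := by simp only [c]; field_simp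
  have hD : 2 * c * ‖h‖ ^ 2 ≤ (1 - lam) * dissipation x d := by
    have hscale : 4 * d ^ 2 * (2 * c * ‖h‖ ^ 2) = (1 - lam) * (d * η * ‖h‖ ^ 2) := by
      linear_combination (d * ‖h‖ ^ 2) * h8c
    refine le_of_mul_le_mul_left ?_ (by positivity : (0 : ℝ) < 4 * d ^ 2)
    linarith [mul_le_mul_of_nonneg_left hgap' (sub_nonneg.2 hlam)]
  have hsq : ‖x d‖ ^ 2 ≤ ((1 - c) * ‖h‖) ^ 2 := by
    nlinarith [sq_nonneg (c * ‖h‖)]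
  rw [← partialScan_self]
  exact (pow_le_pow_iff_left₀ (norm_nonneg _) (by nlinarith [norm_nonneg h]) two_ne_zero).1 hsq

end Assembly

theorem stmt8_general {H : Type*} [NormedAddCommGroup H] [InnerProductSpace ℝ H] [CompleteSpace H]
    {d : ℕ} (hd : 0 < d)
    (K P : Fin d → H →L[ℝ] H) (Pi0 : H →L[ℝ] H)
    (hPsa : ∀ j, IsSelfAdjoint (P j)) (hPidem : ∀ j, P j ∘L P j = P j)
    (hKnorm : ∀ j, ‖K j‖ ≤ 1)
    (hKP : ∀ j, K j ∘L P j = P j) (hPK : ∀ j, P j ∘L K j = P j)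
    (hPi0sa : IsSelfAdjoint Pi0) (hPi0idem : Pi0 ∘L Pi0 = Pi0)
    (hKPi : ∀ j, K j ∘L Pi0 = Pi0)
    (lam0 : ℝ) (hlam0 : lam0 < 1) (hdiff : ∀ j, ‖K j - P j‖ ≤ lam0)
    (η : ℝ) (hη : η ∈ Set.Ioc (0 : ℝ) 1)
    (hRCW : ‖(d : ℝ)⁻¹ • (∑ j, K j) - Pi0‖ ≤ 1 - η) :
    ‖(List.ofFn K).reverse.prod - Pi0‖
      ≤ 1 - (1 - lam0) ^ 2 * η / (8 * ((d : ℝ) + 1) * (1 + lam0)) := by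
  obtain ⟨hη0, hη1⟩ := hη
  have hlam0_nonneg : 0 ≤ lam0 := (norm_nonneg _).trans (hdiff ⟨0, hd⟩)
  have hd1 : (1 : ℝ) ≤ d := by exact_mod_cast hd
  have hscan_Pi0 : (List.ofFn K).reverse.prod * Pi0 = Pi0 :=
    List.prod_mul_eq_of_forall_mul_eq (by simpa [ContinuousLinearMap.mul_def] using hKPi)
  calc ‖(List.ofFn K).reverse.prod - Pi0‖ ≤ 1 - (1 - lam0) * η / (8 * d) :=
        opNorm_sub_le_of_forall_apply_le ⟨hPi0idem, hPi0sa⟩ hscan_Pi0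
          (sub_nonneg.2 (one_sub_mul_div_le_one hd1 hlam0_nonneg hlam0.le hη1)) fun _ hh ↦
          norm_scan_apply_le hd (fun j ↦ ⟨hPidem j, hPsa j⟩) hKnorm hKP hPK hdiff hlam0.le hη1
            hRCW hh
    _ ≤ _ := by linarith [one_sub_sq_mul_div_le (d := d) (by linarith) hlam0_nonneg hlam0.le hη0.le]

/-- Solidarity from random-scan to deterministic-scan: `K₁,…,K_d` are self-adjoint Markov
contraction operators on `L²(Π)` with `K_jP_j = P_jK_j = P_j` for orthogonal projections
`P_j`, `‖K_j − P_j‖ ≤ λ₀ < 1`, `Π` the rank-one projection onto constants with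
`ΠK_j = K_jΠ = Π` (and `ΠP_j = P_jΠ = Π`).  If `‖P_RCW − Π‖ ≤ 1 − η` for some
`η ∈ (0,1]`, where `P_RCW = (1/d)Σⱼ K_j`, then the deterministic scan
`P_DCW = K_d⋯K₁` satisfies `‖P_DCW − Π‖ ≤ 1 − (1−λ₀)²η/(8(d+1)(1+λ₀))`. -/
theorem stmt8 {H : Type*} [NormedAddCommGroup H] [InnerProductSpace ℝ H] [CompleteSpace H]
    {d : ℕ} (hd : 0 < d)
    (K P : Fin d → H →L[ℝ] H) (Pi0 : H →L[ℝ] H)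
    (hPsa : ∀ j, IsSelfAdjoint (P j)) (hPidem : ∀ j, P j ∘L P j = P j)
    (hKsa : ∀ j, IsSelfAdjoint (K j)) (hKnorm : ∀ j, ‖K j‖ ≤ 1)
    (hKP : ∀ j, K j ∘L P j = P j) (hPK : ∀ j, P j ∘L K j = P j)
    (hPi0sa : IsSelfAdjoint Pi0) (hPi0idem : Pi0 ∘L Pi0 = Pi0)
    (hPiK : ∀ j, Pi0 ∘L K j = Pi0) (hKPi : ∀ j, K j ∘L Pi0 = Pi0)
    (hPiP : ∀ j, Pi0 ∘L P j = Pi0) (hPPi : ∀ j, P j ∘L Pi0 = Pi0)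
    (lam0 : ℝ) (hlam0 : lam0 < 1) (hdiff : ∀ j, ‖K j - P j‖ ≤ lam0)
    (η : ℝ) (hη : η ∈ Set.Ioc (0 : ℝ) 1)
    (hRCW : ‖(d : ℝ)⁻¹ • (∑ j, K j) - Pi0‖ ≤ 1 - η) :
    ‖(List.ofFn K).reverse.prod - Pi0‖
      ≤ 1 - (1 - lam0) ^ 2 * η / (8 * ((d : ℝ) + 1) * (1 + lam0)) :=
  stmt8_general hd K P Pi0 hPsa hPidem hKnorm hKP hPK hPi0sa hPi0idem hKPi lam0 hlam0 hdiff η hη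
    hRCW
end

section
/- Comparison of random-scan component-wise and random-scan Gibbs spectral gaps: with K_j, P_j, λ₀ as above, P_RCW = (1/d)Σⱼ K_j and P_RSG = (1/d)Σⱼ P_j, the operator-norm gaps satisfy (1−λ₀)(1 − ‖P_RSG − Π‖) ≤ 1 − ‖P_RCW − Π‖ ≤ (1+λ₀)(1 − ‖P_RSG − Π‖). -/
open ContinuousLinearMap
open scoped RealInnerProductSpace

/-- For a symmetric operator on a real inner product space, a bound on the
quadratic form gives a bound on the operator norm. -/
theorem stmt9_aux_norm_le {H : Type*} [NormedAddCommGroup H] [InnerProductSpace ℝ H]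
    (A : H →L[ℝ] H) (hsymm : ∀ u v : H, ⟪A u, v⟫ = ⟪u, A v⟫)
    (c : ℝ) (hc : 0 ≤ c) (h : ∀ x : H, |⟪A x, x⟫| ≤ c * ‖x‖ ^ 2) : ‖A‖ ≤ c := by
  refine A.opNorm_le_bound hc (fun x => ?_)
  by_cases hx : A x = 0
  · rw [hx, norm_zero]; positivity
  have hx0 : x ≠ 0 := by rintro rfl; simp at hx
  have hxpos : (0:ℝ) < ‖x‖ := norm_pos_iff.mpr hx0
  have hAxpos : (0:ℝ) < ‖A x‖ := norm_pos_iff.mpr hx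
  set y : H := (‖x‖ / ‖A x‖) • A x with hy
  have hyn : ‖y‖ = ‖x‖ := by
    rw [hy, norm_smul, Real.norm_eq_abs, abs_div, abs_of_nonneg hxpos.le,
      abs_of_nonneg hAxpos.le, div_mul_cancel₀]
    exact hAxpos.ne'
  have hinner : ⟪A x, y⟫ = ‖x‖ * ‖A x‖ := by
    rw [hy, real_inner_smul_right, real_inner_self_eq_norm_sq]
    field_simp
  have h1 : ⟪A (x + y), x + y⟫
      = ⟪A x, x⟫ + ⟪A x, y⟫ + ⟪A y, x⟫ + ⟪A y, y⟫ := by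
    simp [map_add, inner_add_left, inner_add_right]; ring
  have h2 : ⟪A (x - y), x - y⟫
      = ⟪A x, x⟫ - ⟪A x, y⟫ - ⟪A y, x⟫ + ⟪A y, y⟫ := by
    simp [map_sub, inner_sub_left, inner_sub_right]; ring
  have h3 : ⟪A y, x⟫ = ⟪A x, y⟫ := by
    rw [hsymm y x, real_inner_comm]
  have hpar : ‖x + y‖ ^ 2 + ‖x - y‖ ^ 2 = 2 * ‖x‖ ^ 2 + 2 * ‖y‖ ^ 2 := by
    rw [norm_add_sq_real, norm_sub_sq_real]; ring
  have b1 := (abs_le.mp (h (x + y))).2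
  have b1' := (abs_le.mp (h (x + y))).1
  have b2 := (abs_le.mp (h (x - y))).2
  have b2' := (abs_le.mp (h (x - y))).1
  have hb2 : (0:ℝ) ≤ c * ‖x - y‖ ^ 2 := by positivity
  have key : 4 * (‖x‖ * ‖A x‖) ≤ 4 * c * ‖x‖ ^ 2 := by
    have : ⟪A (x + y), x + y⟫ - ⟪A (x - y), x - y⟫ = 4 * ⟪A x, y⟫ := by
      rw [h1, h2, h3]; ring
    have hsum : c * (‖x + y‖ ^ 2 + ‖x - y‖ ^ 2) = 4 * c * ‖x‖ ^ 2 := by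
      rw [hpar, hyn]; ring
    nlinarith [hsum, hinner, this, b1, b2']
  nlinarith [hxpos, hAxpos]

/-- Comparison of random-scan component-wise and random-scan Gibbs spectral gaps:
with `K_j`, `P_j`, `λ₀` as in the block-wise contraction setting,
`P_RCW = (1/d)Σⱼ K_j` and `P_RSG = (1/d)Σⱼ P_j`, the operator-norm gaps satisfy
`(1−λ₀)(1 − ‖P_RSG − Π‖) ≤ 1 − ‖P_RCW − Π‖ ≤ (1+λ₀)(1 − ‖P_RSG − Π‖)`. -/
theorem stmt9 {H : Type*} [NormedAddCommGroup H] [InnerProductSpace ℝ H] [CompleteSpace H]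
    {d : ℕ} (hd : 0 < d)
    (K P : Fin d → H →L[ℝ] H) (Pi0 : H →L[ℝ] H)
    (hPsa : ∀ j, IsSelfAdjoint (P j)) (hPidem : ∀ j, P j ∘L P j = P j)
    (hKsa : ∀ j, IsSelfAdjoint (K j)) (hKnorm : ∀ j, ‖K j‖ ≤ 1)
    (hKP : ∀ j, K j ∘L P j = P j) (hPK : ∀ j, P j ∘L K j = P j)
    (hPi0sa : IsSelfAdjoint Pi0) (hPi0idem : Pi0 ∘L Pi0 = Pi0)
    (hPiK : ∀ j, Pi0 ∘L K j = Pi0) (hKPi : ∀ j, K j ∘L Pi0 = Pi0)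
    (hPiP : ∀ j, Pi0 ∘L P j = Pi0) (hPPi : ∀ j, P j ∘L Pi0 = Pi0)
    (lam0 : ℝ) (hlam0 : lam0 < 1) (hdiff : ∀ j, ‖K j - P j‖ ≤ lam0) :
    (1 - lam0) * (1 - ‖(d : ℝ)⁻¹ • (∑ j, P j) - Pi0‖)
        ≤ 1 - ‖(d : ℝ)⁻¹ • (∑ j, K j) - Pi0‖
      ∧ 1 - ‖(d : ℝ)⁻¹ • (∑ j, K j) - Pi0‖
        ≤ (1 + lam0) * (1 - ‖(d : ℝ)⁻¹ • (∑ j, P j) - Pi0‖) := by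
  have hlam0' : 0 ≤ lam0 := le_trans (norm_nonneg _) (hdiff ⟨0, hd⟩)
  have hdpos : (0:ℝ) < (d : ℝ) := by exact_mod_cast hd
  have symK : ∀ j (u v : H), ⟪K j u, v⟫ = ⟪u, K j v⟫ := fun j =>
    isSelfAdjoint_iff_isSymmetric.mp (hKsa j)
  have symP : ∀ j (u v : H), ⟪P j u, v⟫ = ⟪u, P j v⟫ := fun j =>
    isSelfAdjoint_iff_isSymmetric.mp (hPsa j)
  have symPi : ∀ (u v : H), ⟪Pi0 u, v⟫ = ⟪u, Pi0 v⟫ :=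
    isSelfAdjoint_iff_isSymmetric.mp hPi0sa
  have cKP : ∀ j f, K j (P j f) = P j f := fun j f => by
    simpa using ContinuousLinearMap.ext_iff.mp (hKP j) f
  have cPP : ∀ j f, P j (P j f) = P j f := fun j f => by
    simpa using ContinuousLinearMap.ext_iff.mp (hPidem j) f
  have cPiPi : ∀ f, Pi0 (Pi0 f) = Pi0 f := fun f => by
    simpa using ContinuousLinearMap.ext_iff.mp hPi0idem f
  have cPiP : ∀ j f, Pi0 (P j f) = Pi0 f := fun j f => by
    simpa using ContinuousLinearMap.ext_iff.mp (hPiP j) f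
  have cPPi : ∀ j f, P j (Pi0 f) = Pi0 f := fun j f => by
    simpa using ContinuousLinearMap.ext_iff.mp (hPPi j) f
  set A : H →L[ℝ] H := (d : ℝ)⁻¹ • (∑ j, K j) - Pi0 with hA
  set B : H →L[ℝ] H := (d : ℝ)⁻¹ • (∑ j, P j) - Pi0 with hB
  have hAf : ∀ f : H, ⟪f, A f⟫ = (d:ℝ)⁻¹ * ∑ j, ⟪f, K j f⟫ - ⟪f, Pi0 f⟫ := by
    intro f
    simp [hA, ContinuousLinearMap.sub_apply, ContinuousLinearMap.smul_apply,
      ContinuousLinearMap.sum_apply, inner_sub_right, real_inner_smul_right, inner_sum]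
  have hBf : ∀ f : H, ⟪f, B f⟫ = (d:ℝ)⁻¹ * ∑ j, ⟪f, P j f⟫ - ⟪f, Pi0 f⟫ := by
    intro f
    simp [hB, ContinuousLinearMap.sub_apply, ContinuousLinearMap.smul_apply,
      ContinuousLinearMap.sum_apply, inner_sub_right, real_inner_smul_right, inner_sum]
  have symA : ∀ u v : H, ⟪A u, v⟫ = ⟪u, A v⟫ := by
    intro u v
    simp only [hA, ContinuousLinearMap.sub_apply, ContinuousLinearMap.smul_apply,
      ContinuousLinearMap.sum_apply, inner_sub_left, inner_sub_right,
      real_inner_smul_left, real_inner_smul_right, sum_inner, inner_sum]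
    rw [Finset.sum_congr rfl fun j _ => symK j u v, symPi u v]
  have symB : ∀ u v : H, ⟪B u, v⟫ = ⟪u, B v⟫ := by
    intro u v
    simp only [hB, ContinuousLinearMap.sub_apply, ContinuousLinearMap.smul_apply,
      ContinuousLinearMap.sum_apply, inner_sub_left, inner_sub_right,
      real_inner_smul_left, real_inner_smul_right, sum_inner, inner_sum]
    rw [Finset.sum_congr rfl fun j _ => symP j u v, symPi u v]
  have hPiNN : ∀ f : H, 0 ≤ ⟪f, Pi0 f⟫ := by
    intro f
    have h : ⟪f, Pi0 f⟫ = ⟪Pi0 f, Pi0 f⟫ := by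
      conv_lhs => rw [← cPiPi f]
      rw [← symPi f (Pi0 f)]
    rw [h]
    exact real_inner_self_nonneg
  have hBNN : ∀ f : H, 0 ≤ ⟪f, B f⟫ := by
    intro f
    rw [hBf f]
    have key : ∀ j : Fin d, ⟪f, Pi0 f⟫ ≤ ⟪f, P j f⟫ := by
      intro j
      set q : H := P j f - Pi0 f with hq
      have h1 : P j q = q := by rw [hq, map_sub, cPP, cPPi]
      have h2 : Pi0 q = 0 := by rw [hq, map_sub, cPiP, cPiPi, sub_self]
      have h3 : ⟪f, P j f⟫ - ⟪f, Pi0 f⟫ = ⟪q, q⟫ := by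
        have h4 : ⟪f, q⟫ = ⟪q, q⟫ := by
          calc ⟪f, q⟫ = ⟪f, P j q - Pi0 q⟫ := by rw [h1, h2, sub_zero]
            _ = ⟪P j f, q⟫ - ⟪Pi0 f, q⟫ := by
                rw [inner_sub_right, symP j f q, symPi f q]
            _ = ⟪q, q⟫ := by rw [← inner_sub_left]
        rw [← h4, hq, inner_sub_right]
      have hq0 : (0:ℝ) ≤ ⟪q, q⟫ := real_inner_self_nonneg
      linarith
    have hsum : (d:ℝ) * ⟪f, Pi0 f⟫ ≤ ∑ j, ⟪f, P j f⟫ := by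
      calc (d:ℝ) * ⟪f, Pi0 f⟫ = ∑ _j : Fin d, ⟪f, Pi0 f⟫ := by
            simp [Finset.sum_const, nsmul_eq_mul]
        _ ≤ ∑ j, ⟪f, P j f⟫ := Finset.sum_le_sum fun j _ => key j
    have h5 := mul_le_mul_of_nonneg_left hsum (le_of_lt (inv_pos.mpr hdpos))
    rw [← mul_assoc, inv_mul_cancel₀ hdpos.ne', one_mul] at h5
    linarith
  have quad : ∀ f : H, |⟪f, A f⟫ - ⟪f, B f⟫| ≤ lam0 * (‖f‖ ^ 2 - ⟪f, B f⟫) := by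
    intro f
    have hE2 : ∀ j : Fin d, |⟪f, K j f⟫ - ⟪f, P j f⟫| ≤ lam0 * (⟪f, f⟫ - ⟪f, P j f⟫) := by
      intro j
      set g : H := f - P j f with hg
      have hPg : P j g = 0 := by rw [hg, map_sub, cPP, sub_self]
      have hKg : K j g = K j f - P j f := by rw [hg, map_sub, cKP]
      have hSg : K j g - P j g = K j f - P j f := by rw [hKg, hPg, sub_zero]
      have hval : ⟪f, K j f⟫ - ⟪f, P j f⟫ = ⟪K j f - P j f, g⟫ := by
        calc ⟪f, K j f⟫ - ⟪f, P j f⟫ = ⟪f, K j f - P j f⟫ := (inner_sub_right f _ _).symm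
          _ = ⟪f, K j g - P j g⟫ := by rw [hSg]
          _ = ⟪K j f, g⟫ - ⟪P j f, g⟫ := by
              rw [inner_sub_right, ← symK j f g, ← symP j f g]
          _ = ⟪K j f - P j f, g⟫ := (inner_sub_left _ _ _).symm
      have hgsq : ⟪f, f⟫ - ⟪f, P j f⟫ = ‖g‖ ^ 2 := by
        have h0 : ⟪P j f, g⟫ = 0 := by rw [symP j f g, hPg, inner_zero_right]
        have h1 : ⟪g, g⟫ = ⟪f, f⟫ - ⟪f, P j f⟫ := by
          calc ⟪g, g⟫ = ⟪f, g⟫ - ⟪P j f, g⟫ := by rw [hg, inner_sub_left]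
            _ = ⟪f, g⟫ := by rw [h0, sub_zero]
            _ = ⟪f, f⟫ - ⟪f, P j f⟫ := by rw [hg, inner_sub_right]
        rw [← h1, real_inner_self_eq_norm_sq]
      have hop : ‖(K j - P j) g‖ ≤ lam0 * ‖g‖ :=
        le_trans ((K j - P j).le_opNorm g)
          (mul_le_mul_of_nonneg_right (hdiff j) (norm_nonneg g))
      calc |⟪f, K j f⟫ - ⟪f, P j f⟫| = |⟪(K j - P j) g, g⟫| := by
            rw [hval, ← hSg]; simp [ContinuousLinearMap.sub_apply]
        _ ≤ ‖(K j - P j) g‖ * ‖g‖ := abs_real_inner_le_norm _ _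
        _ ≤ (lam0 * ‖g‖) * ‖g‖ := mul_le_mul_of_nonneg_right hop (norm_nonneg g)
        _ = lam0 * (⟪f, f⟫ - ⟪f, P j f⟫) := by rw [hgsq]; ring
    have hdiffsum : ⟪f, A f⟫ - ⟪f, B f⟫
        = (d:ℝ)⁻¹ * ∑ j, (⟪f, K j f⟫ - ⟪f, P j f⟫) := by
      rw [hAf f, hBf f, Finset.sum_sub_distrib, mul_sub]; ring
    have habs : |∑ j, (⟪f, K j f⟫ - ⟪f, P j f⟫)|
        ≤ ∑ j, lam0 * (⟪f, f⟫ - ⟪f, P j f⟫) :=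
      le_trans (Finset.abs_sum_le_sum_abs _ _) (Finset.sum_le_sum fun j _ => hE2 j)
    have hsum2 : (d:ℝ)⁻¹ * ∑ j, lam0 * (⟪f, f⟫ - ⟪f, P j f⟫)
        = lam0 * (⟪f, f⟫ - (d:ℝ)⁻¹ * ∑ j, ⟪f, P j f⟫) := by
      rw [← Finset.mul_sum, Finset.sum_sub_distrib, Finset.sum_const, Finset.card_univ,
        Fintype.card_fin, nsmul_eq_mul]
      rw [show (d:ℝ)⁻¹ * (lam0 * ((d:ℝ) * ⟪f, f⟫ - ∑ j, ⟪f, P j f⟫))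
            = lam0 * ((d:ℝ)⁻¹ * (d:ℝ) * ⟪f, f⟫ - (d:ℝ)⁻¹ * ∑ j, ⟪f, P j f⟫) from by ring,
        inv_mul_cancel₀ hdpos.ne', one_mul]
    have hBsum : (d:ℝ)⁻¹ * ∑ j, ⟪f, P j f⟫ = ⟪f, B f⟫ + ⟪f, Pi0 f⟫ := by
      rw [hBf f]; ring
    have hff : ⟪f, f⟫ = ‖f‖ ^ 2 := real_inner_self_eq_norm_sq f
    calc |⟪f, A f⟫ - ⟪f, B f⟫| = (d:ℝ)⁻¹ * |∑ j, (⟪f, K j f⟫ - ⟪f, P j f⟫)| := by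
          rw [hdiffsum, abs_mul, abs_of_nonneg (le_of_lt (inv_pos.mpr hdpos))]
      _ ≤ (d:ℝ)⁻¹ * ∑ j, lam0 * (⟪f, f⟫ - ⟪f, P j f⟫) :=
          mul_le_mul_of_nonneg_left habs (le_of_lt (inv_pos.mpr hdpos))
      _ = lam0 * (‖f‖ ^ 2 - ⟪f, B f⟫ - ⟪f, Pi0 f⟫) := by
          rw [hsum2, hBsum, hff]; ring
      _ ≤ lam0 * (‖f‖ ^ 2 - ⟪f, B f⟫) := by
          have := hPiNN f
          nlinarith
  have hBle : ∀ f : H, ⟪f, B f⟫ ≤ ‖B‖ * ‖f‖ ^ 2 := by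
    intro f
    calc ⟪f, B f⟫ ≤ ‖f‖ * ‖B f‖ := real_inner_le_norm f (B f)
      _ ≤ ‖f‖ * (‖B‖ * ‖f‖) := mul_le_mul_of_nonneg_left (B.le_opNorm f) (norm_nonneg f)
      _ = ‖B‖ * ‖f‖ ^ 2 := by ring
  have hAle : ∀ f : H, ⟪f, A f⟫ ≤ ‖A‖ * ‖f‖ ^ 2 := by
    intro f
    calc ⟪f, A f⟫ ≤ ‖f‖ * ‖A f‖ := real_inner_le_norm f (A f)
      _ ≤ ‖f‖ * (‖A‖ * ‖f‖) := mul_le_mul_of_nonneg_left (A.le_opNorm f) (norm_nonneg f)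
      _ = ‖A‖ * ‖f‖ ^ 2 := by ring
  have hc : (0:ℝ) < 1 + lam0 := by linarith
  have hnA : ‖A‖ ≤ lam0 + (1 - lam0) * ‖B‖ := by
    apply stmt9_aux_norm_le A symA
    · have : 0 ≤ (1 - lam0) * ‖B‖ := mul_nonneg (by linarith) (norm_nonneg _)
      linarith
    · intro x
      have hq1 := (abs_le.mp (quad x)).1
      have hq2 := (abs_le.mp (quad x)).2
      rw [real_inner_comm, abs_le]
      constructor
      · nlinarith [hBNN x, hBle x, sq_nonneg ‖x‖, norm_nonneg B]
      · nlinarith [hBNN x, hBle x, sq_nonneg ‖x‖, norm_nonneg B]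
  have hnB : ‖B‖ ≤ (lam0 + ‖A‖) / (1 + lam0) := by
    apply stmt9_aux_norm_le B symB
    · exact div_nonneg (add_nonneg hlam0' (norm_nonneg _)) hc.le
    · intro x
      rw [real_inner_comm, abs_of_nonneg (hBNN x), div_mul_eq_mul_div, le_div_iff₀ hc]
      have hq1 := (abs_le.mp (quad x)).1
      nlinarith [hAle x]
  constructor
  · nlinarith [hnA]
  · have h7 : ‖B‖ * (1 + lam0) ≤ lam0 + ‖A‖ := by
      rw [← le_div_iff₀ hc]; exact hnB
    nlinarith [h7]
end

section
/- Gap extension to longer products: assume ‖K_j − P_j‖ ≤ λ₀ < 1 for all j ∈ [d] and ‖K_{σ(d)}⋯K_{σ(1)} − Π‖ ≤ 1 − η for a permutation σ and some η ∈ (0,1]. Let L ≥ d and θ : [L] → [d] be such that (θ(L),…,θ(1)) contains (σ(d),…,σ(1)) as a subsequence. Then ‖K_{θ(L)}⋯K_{θ(1)} − Π‖ ≤ 1 − (1−λ₀)·η/(2(L−d+1)(1+λ₀)). -/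
set_option maxHeartbeats 1600000


open ContinuousLinearMap

section Stmt11Aux

open RealInnerProductSpace

variable {H : Type*} [NormedAddCommGroup H] [InnerProductSpace ℝ H]

/-- Cauchy–Schwarz for the PSD bilinear form `⟪u,v⟫ − ⟪Wu,Wv⟫` of a pointwise contraction. -/
private lemma stmt11_cs (W : H →L[ℝ] H) (hW : ∀ z : H, ‖W z‖ ≤ ‖z‖) (u v : H) :
    (⟪u, v⟫ - ⟪W u, W v⟫) ^ 2
      ≤ (‖u‖ ^ 2 - ‖W u‖ ^ 2) * (‖v‖ ^ 2 - ‖W v‖ ^ 2) := by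
  have key : ∀ t : ℝ,
      0 ≤ (‖v‖ ^ 2 - ‖W v‖ ^ 2) * (t * t)
          + (2 * (⟪u, v⟫ - ⟪W u, W v⟫)) * t + (‖u‖ ^ 2 - ‖W u‖ ^ 2) := by
    intro t
    have h1 : 0 ≤ ‖u + t • v‖ ^ 2 - ‖W (u + t • v)‖ ^ 2 := by
      have h := hW (u + t • v)
      nlinarith [norm_nonneg (W (u + t • v)), norm_nonneg (u + t • v)]
    have hsmul : ∀ w : H, ‖t • w‖ ^ 2 = t ^ 2 * ‖w‖ ^ 2 := by
      intro w
      rw [norm_smul, mul_pow, Real.norm_eq_abs, sq_abs]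
    have E1 : ‖u + t • v‖ ^ 2 = ‖u‖ ^ 2 + 2 * (t * ⟪u, v⟫) + t ^ 2 * ‖v‖ ^ 2 := by
      rw [norm_add_sq_real, real_inner_smul_right, hsmul]
    have EW : W (u + t • v) = W u + t • W v := by rw [map_add, map_smul]
    have E2 : ‖W (u + t • v)‖ ^ 2
        = ‖W u‖ ^ 2 + 2 * (t * ⟪W u, W v⟫) + t ^ 2 * ‖W v‖ ^ 2 := by
      rw [EW, norm_add_sq_real, real_inner_smul_right, hsmul]
    rw [E1, E2] at h1
    nlinarith [h1]
  have hd := discrim_le_zero key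
  rw [discrim] at hd
  nlinarith [hd]

/-- The movement bound: `‖x − ax‖² ≤ c (‖x‖² − ‖ax‖²)` for a letter `a`. -/
private lemma stmt11_F1 {lam0 : ℝ} (hl0 : 0 ≤ lam0) (hl1 : lam0 < 1) (a P : H →L[ℝ] H)
    (hPsym : ∀ u v : H, ⟪P u, v⟫ = ⟪u, P v⟫)
    (hPP : ∀ z, P (P z) = P z) (haP : ∀ z, a (P z) = P z) (hPa : ∀ z, P (a z) = P z)
    (hb : ‖a - P‖ ≤ lam0) (x : H) :
    ‖x - a x‖ ^ 2 ≤ (1 + lam0) / (1 - lam0) * (‖x‖ ^ 2 - ‖a x‖ ^ 2) := by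
  set q := x - P x with hq
  set w := a x - P x with hwdef
  have hBle : ‖w‖ ≤ lam0 * ‖q‖ := by
    have h1 : (a - P) q = w := by
      simp only [ContinuousLinearMap.sub_apply, hq, map_sub, haP, hPP, hwdef]
      abel
    calc ‖w‖ = ‖(a - P) q‖ := by rw [h1]
      _ ≤ ‖a - P‖ * ‖q‖ := le_opNorm _ _
      _ ≤ lam0 * ‖q‖ := mul_le_mul_of_nonneg_right hb (norm_nonneg q)
  have hPxPx : ⟪P x, P x⟫ = ⟪P x, x⟫ := by
    rw [hPsym, hPP, real_inner_comm]
  have horth1 : ⟪P x, q⟫ = 0 := by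
    rw [hq, inner_sub_right, hPxPx]; ring
  have horth2 : ⟪P x, w⟫ = 0 := by
    rw [hwdef, inner_sub_right, hPsym, hPa, hPsym, hPP]; ring
  have e1 : ‖x‖ ^ 2 = ‖P x‖ ^ 2 + ‖q‖ ^ 2 := by
    have h := norm_add_sq_real (P x) q
    have hx : P x + q = x := by rw [hq]; abel
    rw [hx, horth1] at h; linarith
  have e2 : ‖a x‖ ^ 2 = ‖P x‖ ^ 2 + ‖w‖ ^ 2 := by
    have h := norm_add_sq_real (P x) w
    have hx : P x + w = a x := by rw [hwdef]; abel
    rw [hx, horth2] at h; linarith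
  have e3 : x - a x = q - w := by rw [hq, hwdef]; abel
  have e4 : ‖q - w‖ ^ 2 = ‖q‖ ^ 2 - 2 * ⟪q, w⟫ + ‖w‖ ^ 2 := norm_sub_sq_real q w
  have hinner : -(‖q‖ * ‖w‖) ≤ ⟪q, w⟫ := by
    have h := abs_real_inner_le_norm q w
    cases' abs_le.1 h with h1 _
    linarith
  have hden : (0:ℝ) < 1 - lam0 := by linarith
  have hcid : (1 + lam0) / (1 - lam0) * (1 - lam0) = 1 + lam0 :=
    div_mul_cancel₀ _ (ne_of_gt hden)
  rw [e3, e4, e1, e2]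
  have hqn : 0 ≤ ‖q‖ := norm_nonneg q
  have hwn : 0 ≤ ‖w‖ := norm_nonneg w
  have t1 : 0 ≤ (lam0 * ‖q‖ - ‖w‖) * (‖q‖ + ‖w‖) :=
    mul_nonneg (sub_nonneg.2 hBle) (add_nonneg hqn hwn)
  have t2 : 0 ≤ ‖q‖ * ‖w‖ + ⟪q, w⟫ := by linarith
  have t3 : 0 ≤ (1 - lam0) * (‖q‖ * ‖w‖ + ⟪q, w⟫) := mul_nonneg hden.le t2
  nlinarith [t1, t3, hcid, hden]

/-- Scalar AM–GM step used in the main induction. -/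
private lemma stmt11_amgm {B Du De s t : ℝ} (hs : 0 < s) (ht : 0 < t) (hst : 1 ≤ s * t)
    (hDu : 0 ≤ Du) (hDe : 0 ≤ De) (hB : B ^ 2 ≤ Du * De) :
    2 * B ≤ s * Du + t * De := by
  rcases le_or_gt B 0 with h0 | h0
  · nlinarith [mul_nonneg hs.le hDu, mul_nonneg ht.le hDe]
  · have h4 : (2 * B) ^ 2 ≤ (s * Du + t * De) ^ 2 := by
      nlinarith [sq_nonneg (s * Du - t * De), mul_nonneg hDu hDe,
        mul_nonneg (mul_nonneg hs.le ht.le) (mul_nonneg hDu hDe)]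
    nlinarith [h4, mul_nonneg hs.le hDu, mul_nonneg ht.le hDe]

/-- One deletion step. -/
private lemma stmt11_step {c γ : ℝ} (hc : 0 < c) (hγ : 0 < γ) (W a : H →L[ℝ] H)
    (hW : ∀ z : H, ‖W z‖ ≤ ‖z‖)
    (hF1 : ∀ y : H, ‖y - a y‖ ^ 2 ≤ c * (‖y‖ ^ 2 - ‖a y‖ ^ 2)) (x : H) :
    ‖x‖ ^ 2 - ‖W x‖ ^ 2
      ≤ (γ + c) / γ * (‖a x‖ ^ 2 - ‖W (a x)‖ ^ 2) + (γ + c) * (‖x‖ ^ 2 - ‖a x‖ ^ 2) := by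
  set u := a x with hu
  set e := x - a x with he
  have hx : x = u + e := by rw [hu, he]; abel
  have hDu : 0 ≤ ‖u‖ ^ 2 - ‖W u‖ ^ 2 := by
    have h := hW u; nlinarith [norm_nonneg (W u), norm_nonneg u]
  have hDe : 0 ≤ ‖e‖ ^ 2 - ‖W e‖ ^ 2 := by
    have h := hW e; nlinarith [norm_nonneg (W e), norm_nonneg e]
  have hB := stmt11_cs W hW u e
  have E1 : ‖x‖ ^ 2 = ‖u‖ ^ 2 + 2 * ⟪u, e⟫ + ‖e‖ ^ 2 := by
    have h := norm_add_sq_real u e; rw [← hx] at h; exact h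
  have E2 : ‖W x‖ ^ 2 = ‖W u‖ ^ 2 + 2 * ⟪W u, W e⟫ + ‖W e‖ ^ 2 := by
    have hWx : W x = W u + W e := by rw [hx, map_add]
    rw [hWx]; exact norm_add_sq_real _ _
  have hamgm := stmt11_amgm (B := ⟪u, e⟫ - ⟪W u, W e⟫)
      (div_pos hc hγ) (div_pos hγ hc)
      (by rw [div_mul_div_comm, mul_comm]; rw [div_self (by positivity : γ * c ≠ 0)])
      hDu hDe hB
  have hDele : ‖e‖ ^ 2 - ‖W e‖ ^ 2 ≤ ‖e‖ ^ 2 := by nlinarith [norm_nonneg (W e)]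
  have hF1x : ‖e‖ ^ 2 ≤ c * (‖x‖ ^ 2 - ‖a x‖ ^ 2) := hF1 x
  have hcoef1 : (1 : ℝ) + c / γ = (γ + c) / γ := by field_simp
  have hcoef2 : (1 + γ / c) * (‖e‖ ^ 2 - ‖W e‖ ^ 2) ≤ (γ + c) * (‖x‖ ^ 2 - ‖a x‖ ^ 2) := by
    have hpos : (0:ℝ) ≤ 1 + γ / c := by positivity
    have h1 : (1 + γ / c) * (‖e‖ ^ 2 - ‖W e‖ ^ 2)
        ≤ (1 + γ / c) * (c * (‖x‖ ^ 2 - ‖a x‖ ^ 2)) :=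
      mul_le_mul_of_nonneg_left (le_trans hDele hF1x) hpos
    have h2 : (1 + γ / c) * (c * (‖x‖ ^ 2 - ‖a x‖ ^ 2))
        = (γ + c) * (‖x‖ ^ 2 - ‖a x‖ ^ 2) := by
      field_simp; ring
    linarith
  -- combine: Dx = Du + 2B + De ≤ (1+c/γ)Du + (1+γ/c)De
  have htot : ‖x‖ ^ 2 - ‖W x‖ ^ 2
      ≤ (1 + c / γ) * (‖u‖ ^ 2 - ‖W u‖ ^ 2) + (1 + γ / c) * (‖e‖ ^ 2 - ‖W e‖ ^ 2) := by
    nlinarith [hamgm]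
  rw [hcoef1] at htot
  linarith [htot, hcoef2]

private lemma stmt11_revProd_cons (a : H →L[ℝ] H) (l : List (H →L[ℝ] H)) :
    ((a :: l).reverse.prod) = l.reverse.prod * a := by
  rw [List.reverse_cons, List.prod_append, List.prod_singleton]

private lemma stmt11_revProd_contraction {l : List (H →L[ℝ] H)}
    (h : ∀ A ∈ l, ∀ z : H, ‖A z‖ ≤ ‖z‖) : ∀ z : H, ‖l.reverse.prod z‖ ≤ ‖z‖ := by
  induction l with
  | nil => intro z; simp
  | cons a l ih =>
      intro z
      rw [stmt11_revProd_cons, ContinuousLinearMap.mul_apply]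
      exact le_trans (ih (fun A hA => h A (List.mem_cons_of_mem _ hA)) (a z))
        (h a List.mem_cons_self z)

private lemma stmt11_revProd_fix {l : List (H →L[ℝ] H)} {Q : H →L[ℝ] H}
    (h : ∀ A ∈ l, ∀ z : H, A (Q z) = Q z) : ∀ z : H, l.reverse.prod (Q z) = Q z := by
  induction l with
  | nil => intro z; simp
  | cons a l ih =>
      intro z
      rw [stmt11_revProd_cons, ContinuousLinearMap.mul_apply,
        h a List.mem_cons_self z]
      exact ih (fun A hA => h A (List.mem_cons_of_mem _ hA)) z

/-- Main induction: comparison of the quadratic drop along a sublist word. -/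
private lemma stmt11_key {c : ℝ} (hc1 : 1 ≤ c) {s t : List (H →L[ℝ] H)}
    (hst : s.Sublist t) :
    (∀ A ∈ t, (∀ z : H, ‖A z‖ ≤ ‖z‖) ∧
        ∀ x : H, ‖x - A x‖ ^ 2 ≤ c * (‖x‖ ^ 2 - ‖A x‖ ^ 2)) →
    ∀ x : H, ‖x‖ ^ 2 - ‖s.reverse.prod x‖ ^ 2
      ≤ (1 + c * ((t.length : ℝ) - (s.length : ℝ))) * (‖x‖ ^ 2 - ‖t.reverse.prod x‖ ^ 2) := by
  have hc0 : (0:ℝ) < c := lt_of_lt_of_le one_pos hc1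
  induction hst with
  | slnil => intro _ x; simp
  | @cons l₁ l₂ a hst ih =>
      intro hlp x
      have hl2 : ∀ A ∈ l₂, (∀ z : H, ‖A z‖ ≤ ‖z‖) ∧
          ∀ y : H, ‖y - A y‖ ^ 2 ≤ c * (‖y‖ ^ 2 - ‖A y‖ ^ 2) :=
        fun A hA => hlp A (List.mem_cons_of_mem _ hA)
      have ha := hlp a List.mem_cons_self
      have hW : ∀ z : H, ‖l₁.reverse.prod z‖ ≤ ‖z‖ :=
        stmt11_revProd_contraction (fun A hA => (hl2 A (hst.subset hA)).1)
      have hn0 : (0:ℝ) ≤ (l₂.length : ℝ) - (l₁.length : ℝ) := by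
        have := hst.length_le
        have h2 : (l₁.length : ℝ) ≤ (l₂.length : ℝ) := by exact_mod_cast this
        linarith
      set γ : ℝ := 1 + c * ((l₂.length : ℝ) - (l₁.length : ℝ)) with hγ
      have hγ0 : 0 < γ := by nlinarith
      have hstep := stmt11_step hc0 hγ0 l₁.reverse.prod a hW ha.2 x
      have hih := ih hl2 (a x)
      have hih' : (γ + c) / γ * (‖a x‖ ^ 2 - ‖l₁.reverse.prod (a x)‖ ^ 2)
          ≤ (γ + c) * (‖a x‖ ^ 2 - ‖l₂.reverse.prod (a x)‖ ^ 2) := by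
        have hpos : (0:ℝ) ≤ (γ + c) / γ := by positivity
        have h1 := mul_le_mul_of_nonneg_left hih hpos
        have h2 : (γ + c) / γ * (γ * (‖a x‖ ^ 2 - ‖l₂.reverse.prod (a x)‖ ^ 2))
            = (γ + c) * (‖a x‖ ^ 2 - ‖l₂.reverse.prod (a x)‖ ^ 2) := by
          rw [← mul_assoc, div_mul_cancel₀ _ (ne_of_gt hγ0)]
        rw [h2] at h1
        exact h1
      have hgoalcoef : 1 + c * (((a :: l₂).length : ℝ) - (l₁.length : ℝ)) = γ + c := by
        rw [hγ, List.length_cons]; push_cast; ring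
      rw [hgoalcoef, stmt11_revProd_cons, ContinuousLinearMap.mul_apply]
      nlinarith [hstep, hih']
  | @cons_cons l₁ l₂ a hst ih =>
      intro hlp x
      have hl2 : ∀ A ∈ l₂, (∀ z : H, ‖A z‖ ≤ ‖z‖) ∧
          ∀ y : H, ‖y - A y‖ ^ 2 ≤ c * (‖y‖ ^ 2 - ‖A y‖ ^ 2) :=
        fun A hA => hlp A (List.mem_cons_of_mem _ hA)
      have ha := hlp a List.mem_cons_self
      have hn0 : (0:ℝ) ≤ (l₂.length : ℝ) - (l₁.length : ℝ) := by
        have := hst.length_le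
        have h2 : (l₁.length : ℝ) ≤ (l₂.length : ℝ) := by exact_mod_cast this
        linarith
      set γ : ℝ := 1 + c * ((l₂.length : ℝ) - (l₁.length : ℝ)) with hγ
      have hγ1 : 1 ≤ γ := by nlinarith
      have hih := ih hl2 (a x)
      have hΔa : 0 ≤ ‖x‖ ^ 2 - ‖a x‖ ^ 2 := by
        have h := ha.1 x; nlinarith [norm_nonneg (a x), norm_nonneg x]
      have hRHSpos : 0 ≤ ‖a x‖ ^ 2 - ‖l₂.reverse.prod (a x)‖ ^ 2 := by
        have h := stmt11_revProd_contraction (fun A hA => (hl2 A hA).1) (a x)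
        nlinarith [norm_nonneg (l₂.reverse.prod (a x)), norm_nonneg (a x)]
      have hgoalcoef : 1 + c * (((a :: l₂).length : ℝ) - ((a :: l₁).length : ℝ)) = γ := by
        rw [hγ]; simp only [List.length_cons]; push_cast; ring
      rw [hgoalcoef, stmt11_revProd_cons, stmt11_revProd_cons,
        ContinuousLinearMap.mul_apply, ContinuousLinearMap.mul_apply]
      nlinarith [hih, hΔa, hRHSpos]

end Stmt11Aux

section Stmt11Main

open RealInnerProductSpace

/-- Gap extension to longer products: assume `‖K_j − P_j‖ ≤ λ₀ < 1` for all `j ∈ [d]` and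
`‖K_{σ(d)}⋯K_{σ(1)} − Π‖ ≤ 1 − η` for a permutation `σ` and some `η ∈ (0,1]`.  If `L ≥ d`
and `θ : [L] → [d]` is such that `(θ(L),…,θ(1))` contains `(σ(d),…,σ(1))` as a
subsequence (i.e. there are `k₁ < ⋯ < k_d` with `θ(k_j) = σ(j)`), then
`‖K_{θ(L)}⋯K_{θ(1)} − Π‖ ≤ 1 − (1−λ₀)η/(2(L−d+1)(1+λ₀))`. -/
theorem stmt11 {H : Type*} [NormedAddCommGroup H] [InnerProductSpace ℝ H] [CompleteSpace H]
    {d L : ℕ} (hd : 0 < d) (hL : d ≤ L)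
    (K P : Fin d → H →L[ℝ] H) (Pi0 : H →L[ℝ] H)
    (hPsa : ∀ j, IsSelfAdjoint (P j)) (hPidem : ∀ j, P j ∘L P j = P j)
    (hKsa : ∀ j, IsSelfAdjoint (K j)) (hKnorm : ∀ j, ‖K j‖ ≤ 1)
    (hKP : ∀ j, K j ∘L P j = P j) (hPK : ∀ j, P j ∘L K j = P j)
    (hPi0sa : IsSelfAdjoint Pi0) (hPi0idem : Pi0 ∘L Pi0 = Pi0)
    (hPiK : ∀ j, Pi0 ∘L K j = Pi0) (hKPi : ∀ j, K j ∘L Pi0 = Pi0)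
    (hPiP : ∀ j, Pi0 ∘L P j = Pi0) (hPPi : ∀ j, P j ∘L Pi0 = Pi0)
    (lam0 : ℝ) (hlam0 : lam0 < 1) (hdiff : ∀ j, ‖K j - P j‖ ≤ lam0)
    (σ : Equiv.Perm (Fin d)) (η : ℝ) (hη : η ∈ Set.Ioc (0 : ℝ) 1)
    (hσ : ‖(List.ofFn fun j => K (σ j)).reverse.prod - Pi0‖ ≤ 1 - η)
    (θ : Fin L → Fin d)
    (hsub : ∃ k : Fin d → Fin L, StrictMono k ∧ ∀ j, θ (k j) = σ j) :
    ‖(List.ofFn fun i => K (θ i)).reverse.prod - Pi0‖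
      ≤ 1 - (1 - lam0) * η / (2 * ((L : ℝ) - (d : ℝ) + 1) * (1 + lam0)) := by
  classical
  obtain ⟨hη0, hη1⟩ := hη
  obtain ⟨k, hkm, hkθ⟩ := hsub
  have hl0 : 0 ≤ lam0 := le_trans (norm_nonneg (K ⟨0, hd⟩ - P ⟨0, hd⟩)) (hdiff ⟨0, hd⟩)
  have hden : (0:ℝ) < 1 - lam0 := by linarith
  set c : ℝ := (1 + lam0) / (1 - lam0) with hcdef
  have hcid : c * (1 - lam0) = 1 + lam0 := div_mul_cancel₀ _ (ne_of_gt hden)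
  have hc1 : (1:ℝ) ≤ c := by rw [hcdef, le_div_iff₀ hden]; linarith
  have hc0 : (0:ℝ) < c := lt_of_lt_of_le one_pos hc1
  set S : H →L[ℝ] H := (List.ofFn fun j => K (σ j)).reverse.prod with hSdef
  set T : H →L[ℝ] H := (List.ofFn fun i => K (θ i)).reverse.prod with hTdef
  set m : ℝ := (L : ℝ) - (d : ℝ) with hmdef
  have hm0 : 0 ≤ m := by
    rw [hmdef]; have : (d:ℝ) ≤ (L:ℝ) := by exact_mod_cast hL
    linarith
  set ε : ℝ := (1 - lam0) * η / (2 * ((L : ℝ) - (d : ℝ) + 1) * (1 + lam0)) with hεdef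
  have hDn : (0:ℝ) < 2 * ((L : ℝ) - (d : ℝ) + 1) * (1 + lam0) := by
    have h1 : (0:ℝ) < (L : ℝ) - (d : ℝ) + 1 := by rw [← hmdef]; linarith
    nlinarith
  have hε0 : 0 ≤ ε := by
    rw [hεdef]
    exact div_nonneg (mul_nonneg hden.le hη0.le) hDn.le
  have hεhalf : ε ≤ 1 / 2 := by
    rw [hεdef, div_le_iff₀ hDn]
    have h1 : (0:ℝ) < (L : ℝ) - (d : ℝ) + 1 := by rw [← hmdef]; linarith
    nlinarith
  -- letter property for each operator in the lists
  have hLP : ∀ j : Fin d, (∀ z : H, ‖K j z‖ ≤ ‖z‖) ∧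
      ∀ x : H, ‖x - K j x‖ ^ 2 ≤ c * (‖x‖ ^ 2 - ‖K j x‖ ^ 2) := by
    intro j
    constructor
    · intro z
      calc ‖K j z‖ ≤ ‖K j‖ * ‖z‖ := le_opNorm _ _
        _ ≤ 1 * ‖z‖ := mul_le_mul_of_nonneg_right (hKnorm j) (norm_nonneg z)
        _ = ‖z‖ := one_mul _
    · intro x
      refine stmt11_F1 hl0 hlam0 (K j) (P j) ?_ ?_ ?_ ?_ (hdiff j) x
      · intro u v; exact (hPsa j).isSymmetric u v
      · intro z
        have := congrArg (fun f : H →L[ℝ] H => f z) (hPidem j)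
        simpa using this
      · intro z
        have := congrArg (fun f : H →L[ℝ] H => f z) (hKP j)
        simpa using this
      · intro z
        have := congrArg (fun f : H →L[ℝ] H => f z) (hPK j)
        simpa using this
  have hlp : ∀ A ∈ (List.ofFn fun i => K (θ i)), (∀ z : H, ‖A z‖ ≤ ‖z‖) ∧
      ∀ x : H, ‖x - A x‖ ^ 2 ≤ c * (‖x‖ ^ 2 - ‖A x‖ ^ 2) := by
    intro A hA
    rw [List.mem_ofFn] at hA
    obtain ⟨i, rfl⟩ := hA
    exact hLP (θ i)
  -- sublist
  have h3 : (List.ofFn k).Sublist (List.finRange L) := by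
    haveI : IsAntisymm (Fin L) (· ≤ ·) := ⟨fun _ _ h1 h2 => le_antisymm h1 h2⟩
    refine List.sublist_of_subperm_of_pairwise (r := (· ≤ ·)) ?_ ?_ ?_
    · exact (List.nodup_ofFn_ofInjective hkm.injective).subperm
        (fun a _ => List.mem_finRange a)
    · exact List.Pairwise.imp (fun h => le_of_lt h) (List.pairwise_ofFn.mpr (fun _ _ h => hkm h))
    · exact List.Pairwise.imp (fun h => le_of_lt h) (List.pairwise_lt_finRange L)
  have hsl : (List.ofFn fun j => K (σ j)).Sublist (List.ofFn fun i => K (θ i)) := by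
    have h4 := h3.map (fun i => K (θ i))
    rw [← List.ofFn_eq_map] at h4
    have h5 : (List.ofFn k).map (fun i => K (θ i))
        = List.ofFn fun j => K (σ j) := by
      rw [List.map_ofFn]
      congr 1
      funext j
      simp [Function.comp, hkθ j]
    rwa [h5] at h4
  -- fixed point of Pi0 under T
  have hfixT : ∀ z : H, T (Pi0 z) = Pi0 z := by
    rw [hTdef]
    apply stmt11_revProd_fix
    intro A hA z
    rw [List.mem_ofFn] at hA
    obtain ⟨i, rfl⟩ := hA
    have := congrArg (fun f : H →L[ℝ] H => f z) (hKPi (θ i))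
    simpa using this
  -- main bound
  have hbound : ∀ x : H, ‖(T - Pi0) x‖ ≤ (1 - ε) * ‖x‖ := by
    intro x
    set y : H := x - Pi0 x with hydef
    have hy0 : Pi0 y = 0 := by
      rw [hydef, map_sub]
      have := congrArg (fun f : H →L[ℝ] H => f x) hPi0idem
      simp only [ContinuousLinearMap.comp_apply] at this
      rw [this, sub_self]
    have hTx : (T - Pi0) x = T y := by
      have h1 : T x = T (Pi0 x) + T y := by
        rw [← map_add]; congr 1; rw [hydef]; abel
      rw [ContinuousLinearMap.sub_apply, h1, hfixT x]; abel
    have horth : ⟪Pi0 x, y⟫ = 0 := by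
      have hsym : ⟪Pi0 x, Pi0 x⟫ = ⟪Pi0 x, x⟫ := by
        have h1 := hPi0sa.isSymmetric (Pi0 x) x
        have h2 : Pi0 (Pi0 x) = Pi0 x := by
          have := congrArg (fun f : H →L[ℝ] H => f x) hPi0idem
          simpa using this
        calc ⟪Pi0 x, Pi0 x⟫ = ⟪x, Pi0 (Pi0 x)⟫ := hPi0sa.isSymmetric x (Pi0 x)
          _ = ⟪x, Pi0 x⟫ := by rw [h2]
          _ = ⟪Pi0 x, x⟫ := real_inner_comm _ _
      rw [hydef, inner_sub_right, hsym, sub_self]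
    have hyx : ‖y‖ ≤ ‖x‖ := by
      have h := norm_add_sq_real (Pi0 x) y
      have hxe : Pi0 x + y = x := by rw [hydef]; abel
      rw [hxe, horth] at h
      have h2 : ‖y‖ ^ 2 ≤ ‖x‖ ^ 2 := by nlinarith [sq_nonneg ‖Pi0 x‖]
      have := Real.sqrt_le_sqrt h2
      rwa [Real.sqrt_sq (norm_nonneg y), Real.sqrt_sq (norm_nonneg x)] at this
    have hSy : ‖S y‖ ≤ (1 - η) * ‖y‖ := by
      have h1 : S y = (S - Pi0) y := by
        rw [ContinuousLinearMap.sub_apply, hy0, sub_zero]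
      rw [h1]
      calc ‖(S - Pi0) y‖ ≤ ‖S - Pi0‖ * ‖y‖ := le_opNorm _ _
        _ ≤ (1 - η) * ‖y‖ := mul_le_mul_of_nonneg_right hσ (norm_nonneg y)
    have hkey := stmt11_key hc1 hsl hlp y
    simp only [List.length_ofFn] at hkey
    rw [← hSdef, ← hTdef] at hkey
    set γ : ℝ := 1 + c * ((L : ℝ) - (d : ℝ)) with hγdef
    have hγ0 : (0:ℝ) < γ := by rw [hγdef, ← hmdef]; nlinarith
    have hSy2 : ‖S y‖ ^ 2 ≤ (1 - η) ^ 2 * ‖y‖ ^ 2 := by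
      have := pow_le_pow_left₀ (norm_nonneg (S y)) hSy 2
      rwa [mul_pow] at this
    have hεγ : 2 * ε * γ ≤ 2 * η - η ^ 2 := by
      have h1 : 2 * ε * γ = 2 * ((1 - lam0) * η) * γ / (2 * ((L : ℝ) - (d : ℝ) + 1) * (1 + lam0)) := by
        rw [hεdef]; ring
      rw [h1, div_le_iff₀ hDn]
      have e1 : (1 - lam0) * γ = (1 - lam0) + (1 + lam0) * ((L : ℝ) - (d : ℝ)) := by
        rw [hγdef]
        linear_combination ((L : ℝ) - (d : ℝ)) * hcid
      have hA : (0:ℝ) ≤ (1 - η) * (((L : ℝ) - (d : ℝ) + 1) * (1 + lam0)) :=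
        mul_nonneg (by linarith) (mul_nonneg (by linarith) (by linarith))
      have hk : (1 - lam0) + (1 + lam0) * ((L : ℝ) - (d : ℝ))
          ≤ (2 - η) * (((L : ℝ) - (d : ℝ) + 1) * (1 + lam0)) := by
        nlinarith [hA, hl0]
      calc 2 * ((1 - lam0) * η) * γ = 2 * η * ((1 - lam0) * γ) := by ring
        _ = 2 * η * ((1 - lam0) + (1 + lam0) * ((L : ℝ) - (d : ℝ))) := by rw [e1]
        _ ≤ 2 * η * ((2 - η) * (((L : ℝ) - (d : ℝ) + 1) * (1 + lam0))) :=
            mul_le_mul_of_nonneg_left hk (by linarith)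
        _ = (2 * η - η ^ 2) * (2 * ((L : ℝ) - (d : ℝ) + 1) * (1 + lam0)) := by ring
    have hscalar : γ * (2 * ε - ε ^ 2) ≤ 2 * η - η ^ 2 := by
      have h2 : 0 ≤ ε ^ 2 * γ := mul_nonneg (sq_nonneg ε) hγ0.le
      nlinarith [hεγ, h2]
    have hTy2 : ‖T y‖ ^ 2 ≤ ((1 - ε) * ‖y‖) ^ 2 := by
      have h1 : (2 * η - η ^ 2) * ‖y‖ ^ 2 ≤ γ * (‖y‖ ^ 2 - ‖T y‖ ^ 2) := by
        nlinarith [hkey, hSy2]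
      have h2 : γ * ((2 * ε - ε ^ 2) * ‖y‖ ^ 2) ≤ γ * (‖y‖ ^ 2 - ‖T y‖ ^ 2) := by
        calc γ * ((2 * ε - ε ^ 2) * ‖y‖ ^ 2) = (γ * (2 * ε - ε ^ 2)) * ‖y‖ ^ 2 := by ring
          _ ≤ (2 * η - η ^ 2) * ‖y‖ ^ 2 :=
              mul_le_mul_of_nonneg_right hscalar (sq_nonneg ‖y‖)
          _ ≤ γ * (‖y‖ ^ 2 - ‖T y‖ ^ 2) := h1
      have h3 : (2 * ε - ε ^ 2) * ‖y‖ ^ 2 ≤ ‖y‖ ^ 2 - ‖T y‖ ^ 2 :=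
        le_of_mul_le_mul_left h2 hγ0
      nlinarith [h3]
    have hTy : ‖T y‖ ≤ (1 - ε) * ‖y‖ := by
      have hb : 0 ≤ (1 - ε) * ‖y‖ := mul_nonneg (by linarith) (norm_nonneg y)
      have := Real.sqrt_le_sqrt hTy2
      rwa [Real.sqrt_sq (norm_nonneg (T y)), Real.sqrt_sq hb] at this
    rw [hTx]
    calc ‖T y‖ ≤ (1 - ε) * ‖y‖ := hTy
      _ ≤ (1 - ε) * ‖x‖ := mul_le_mul_of_nonneg_left hyx (by linarith)
  exact opNorm_le_bound _ (by linarith) hbound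

end Stmt11Main
end

section
/- Double geometric sum identity: for a, b ∈ [0,1) and a positive integer d, Σ_{n≥1} Σ_{m=1}^{nd} a^{⌊(m−1)/d⌋} b^{nd−m} = 1/((1−a)(1−b)). -/
lemma inner_eq (a b : ℝ) (d : ℕ) (hd : 0 < d) (n : ℕ) :
    ∑ m ∈ Finset.range ((n + 1) * d), a ^ (m / d) * b ^ ((n + 1) * d - 1 - m)
      = (∑ r ∈ Finset.range d, b ^ r) *
        ∑ q ∈ Finset.range (n + 1), a ^ q * (b ^ d) ^ (n - q) := by
  induction n with
  | zero =>
      simp only [Nat.zero_add, one_mul, Finset.range_one, Finset.sum_singleton, pow_zero,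
        Nat.sub_zero, mul_one]
      rw [← Finset.sum_range_reflect (fun r => b ^ r) d]
      refine Finset.sum_congr rfl fun m hm => ?_
      have hm' := Finset.mem_range.mp hm
      rw [Nat.div_eq_of_lt hm', pow_zero, one_mul]
  | succ n ih =>
      have hd1 : 1 ≤ (n + 1) * d := Nat.succ_le_of_lt (Nat.mul_pos (by omega) hd)
      have hsplit : (n + 2) * d = (n + 1) * d + d := by ring
      rw [hsplit, Finset.sum_range_add]
      have h1 : ∑ m ∈ Finset.range ((n + 1) * d),
          a ^ (m / d) * b ^ ((n + 1) * d + d - 1 - m)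
          = b ^ d * ∑ m ∈ Finset.range ((n + 1) * d),
            a ^ (m / d) * b ^ ((n + 1) * d - 1 - m) := by
        rw [Finset.mul_sum]
        refine Finset.sum_congr rfl fun m hm => ?_
        have hm' := Finset.mem_range.mp hm
        have : (n + 1) * d + d - 1 - m = d + ((n + 1) * d - 1 - m) := by omega
        rw [this, pow_add]; ring
      have h2 : ∑ i ∈ Finset.range d,
          a ^ (((n + 1) * d + i) / d) * b ^ ((n + 1) * d + d - 1 - ((n + 1) * d + i))
          = a ^ (n + 1) * ∑ r ∈ Finset.range d, b ^ r := by
        rw [Finset.mul_sum, ← Finset.sum_range_reflect (fun r => a ^ (n+1) * b ^ r) d]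
        refine Finset.sum_congr rfl fun i hi => ?_
        have hi' := Finset.mem_range.mp hi
        have hq : ((n + 1) * d + i) / d = n + 1 := by
          rw [Nat.add_comm, Nat.add_mul_div_right _ _ hd, Nat.div_eq_of_lt hi']
          omega
        rw [hq]
        congr 2
        omega
      rw [h1, h2, ih, Finset.sum_range_succ (fun q => a ^ q * (b ^ d) ^ (n + 1 - q)) (n + 1)]
      have hstep : ∑ q ∈ Finset.range (n + 1), a ^ q * (b ^ d) ^ (n + 1 - q)
          = b ^ d * ∑ q ∈ Finset.range (n + 1), a ^ q * (b ^ d) ^ (n - q) := by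
        rw [Finset.mul_sum]
        refine Finset.sum_congr rfl fun q hq => ?_
        have hq' := Finset.mem_range.mp hq
        have : n + 1 - q = (n - q) + 1 := by omega
        rw [this, pow_succ]; ring
      simp only [hstep, Nat.sub_self, pow_zero, mul_one]
      ring

/-- Double geometric sum identity: for `a, b ∈ [0,1)` and a positive integer `d`,
`Σ_{n≥1} Σ_{m=1}^{nd} a^{⌊(m−1)/d⌋} b^{nd−m} = 1/((1−a)(1−b))`.
(Here the outer sum is reindexed by `n ↦ n+1` and the inner sum by `m ↦ m+1`, so the
floor `⌊(m−1)/d⌋` becomes the natural-number division `m / d`.) -/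
theorem stmt14 (a b : ℝ) (ha : a ∈ Set.Ico (0 : ℝ) 1) (hb : b ∈ Set.Ico (0 : ℝ) 1)
    (d : ℕ) (hd : 0 < d) :
    ∑' n : ℕ, ∑ m ∈ Finset.range ((n + 1) * d), a ^ (m / d) * b ^ ((n + 1) * d - 1 - m)
      = 1 / ((1 - a) * (1 - b)) := by
  obtain ⟨ha0, ha1⟩ := ha
  obtain ⟨hb0, hb1⟩ := hb
  have hc0 : (0:ℝ) ≤ b ^ d := by positivity
  have hc1 : b ^ d < 1 := pow_lt_one₀ hb0 hb1 hd.ne'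
  have hsum : ∑' n : ℕ, ∑ q ∈ Finset.range (n + 1), a ^ q * (b ^ d) ^ (n - q)
      = (1 - a)⁻¹ * (1 - b ^ d)⁻¹ := by
    rw [← tsum_geometric_of_lt_one ha0 ha1, ← tsum_geometric_of_lt_one hc0 hc1]
    exact (tsum_mul_tsum_eq_tsum_sum_range_of_summable_norm
      (by simpa [abs_of_nonneg ha0] using summable_geometric_of_lt_one ha0 ha1)
      (by simpa [abs_of_nonneg hc0] using summable_geometric_of_lt_one hc0 hc1)).symm
  have h1 : (1:ℝ) - a ≠ 0 := by linarith
  have h2 : (1:ℝ) - b ≠ 0 := by linarith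
  have h3 : (1:ℝ) - b ^ d ≠ 0 := by linarith
  have hP : (∑ r ∈ Finset.range d, b ^ r) * (1 - b) = 1 - b ^ d := by
    linear_combination (-1 : ℝ) * geom_sum_mul b d
  calc ∑' n : ℕ, ∑ m ∈ Finset.range ((n + 1) * d), a ^ (m / d) * b ^ ((n + 1) * d - 1 - m)
      = ∑' n : ℕ, (∑ r ∈ Finset.range d, b ^ r) *
          ∑ q ∈ Finset.range (n + 1), a ^ q * (b ^ d) ^ (n - q) :=
        tsum_congr (inner_eq a b d hd)
    _ = (∑ r ∈ Finset.range d, b ^ r) * ((1 - a)⁻¹ * (1 - b ^ d)⁻¹) := by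
        rw [tsum_mul_left, hsum]
    _ = 1 / ((1 - a) * (1 - b)) := by
        rw [eq_div_iff (mul_ne_zero h1 h2)]
        field_simp
        linear_combination hP
end

section
/- Asymptotic variance comparison: let K₁,…,K_d be Markov operators on L²(Π) invariant for Π with ‖K_j − Π‖ ≤ 1, P_RCW = (1/d)Σⱼ K_j, P_DCW = K_d⋯K₁, and suppose ‖P_RCW − Π‖ ≤ 1 − η_R and ‖P_DCW − Π‖ ≤ 1 − η_D with η_R, η_D ∈ (0,1]. Define σ²_DCW(f) = Π(f²) + 2Σ_{n≥1}⟨f, P_DCWⁿ f⟩ and σ²_RCWᵈ(f) = Π(f²) + 2Σ_{n≥1}⟨f, P_RCW^{nd} f⟩ for f ∈ L²(Π) with Πf = 0. Then |σ²_DCW(f) − σ²_RCWᵈ(f)| ≤ (4/(η_R η_D))‖f‖²_Π. -/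
open ContinuousLinearMap


-- algebraic: (T - Π)^(n+1) = T^(n+1) - Π
lemma aux_pow {H : Type*} [NormedAddCommGroup H] [InnerProductSpace ℝ H]
    (T Pi0 : H →L[ℝ] H) (h1 : Pi0 * T = Pi0) (h2 : T * Pi0 = Pi0) (h3 : Pi0 * Pi0 = Pi0) :
    ∀ n : ℕ, (T - Pi0) ^ (n + 1) = T ^ (n + 1) - Pi0 := by
  have hTP : ∀ n : ℕ, T ^ (n + 1) * Pi0 = Pi0 := by
    intro n
    induction n with
    | zero => simpa using h2
    | succ m ih => rw [pow_succ, mul_assoc, h2, ih]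
  intro n
  induction n with
  | zero => simp
  | succ m ih =>
    rw [pow_succ (T - Pi0) (m + 1), ih, sub_mul, mul_sub, mul_sub, hTP, h1, h3, ← pow_succ]
    abel

-- key inner product bound
lemma aux_key {H : Type*} [NormedAddCommGroup H] [InnerProductSpace ℝ H]
    (T Pi0 : H →L[ℝ] H) (h1 : Pi0 * T = Pi0) (h2 : T * Pi0 = Pi0) (h3 : Pi0 * Pi0 = Pi0)
    (f : H) (hf : Pi0 f = 0) (c : ℝ) (hc : ‖T - Pi0‖ ≤ c) (n : ℕ) :
    |(inner ℝ f ((T ^ (n + 1)) f) : ℝ)| ≤ c ^ (n + 1) * ‖f‖ ^ 2 := by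
  have hc0 : 0 ≤ c := le_trans (norm_nonneg _) hc
  have heq : (T ^ (n + 1)) f = ((T - Pi0) ^ (n + 1)) f := by
    rw [aux_pow T Pi0 h1 h2 h3 n]
    simp [sub_apply, hf]
  rw [heq]
  calc |(inner ℝ f (((T - Pi0) ^ (n + 1)) f) : ℝ)|
      ≤ ‖f‖ * ‖((T - Pi0) ^ (n + 1)) f‖ := abs_real_inner_le_norm _ _
    _ ≤ ‖f‖ * (‖(T - Pi0) ^ (n + 1)‖ * ‖f‖) := by
        gcongr; exact le_opNorm _ _
    _ ≤ ‖f‖ * (‖T - Pi0‖ ^ (n + 1) * ‖f‖) := by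
        gcongr; exact norm_pow_le' _ (Nat.succ_pos n)
    _ ≤ ‖f‖ * (c ^ (n + 1) * ‖f‖) := by
        gcongr
    _ = c ^ (n + 1) * ‖f‖ ^ 2 := by ring

-- geometric sum bounds
lemma aux_tsum_bound (r c : ℝ) (hr0 : 0 ≤ r) (hr1 : r < 1) (hc : 0 ≤ c)
    (a : ℕ → ℝ) (ha : ∀ n, |a n| ≤ r ^ (n + 1) * c) :
    Summable a ∧ |∑' n, a n| ≤ r / (1 - r) * c := by
  have hg : Summable (fun n : ℕ => r ^ (n + 1) * c) := by
    have := (summable_geometric_of_lt_one hr0 hr1).mul_right (r * c)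
    refine this.congr fun n => by ring
  have hs : Summable a := by
    refine Summable.of_norm_bounded hg fun n => ?_
    rw [Real.norm_eq_abs]
    exact ha n
  refine ⟨hs, ?_⟩
  have hsabs : Summable (fun n => ‖a n‖) := by simpa [Real.norm_eq_abs] using hs.abs
  have h1 : |∑' n, a n| ≤ ∑' n, |a n| := by
    simpa [Real.norm_eq_abs] using norm_tsum_le_tsum_norm hsabs
  have h2 : ∑' n, |a n| ≤ ∑' n : ℕ, r ^ (n + 1) * c := by
    refine Summable.tsum_le_tsum ha ?_ hg
    simpa [Real.norm_eq_abs] using hsabs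
  have h3 : ∑' n : ℕ, r ^ (n + 1) * c = r / (1 - r) * c := by
    calc ∑' n : ℕ, r ^ (n + 1) * c = ∑' n : ℕ, r ^ n * (r * c) :=
          tsum_congr fun n => by ring
      _ = (1 - r)⁻¹ * (r * c) := by
          rw [tsum_mul_right, tsum_geometric_of_lt_one hr0 hr1]
      _ = r / (1 - r) * c := by ring
  linarith

set_option synthInstance.maxHeartbeats 1000000 in
/-- Asymptotic variance comparison: let `K₁,…,K_d` be Markov operators on `L²(Π)`
invariant for `Π` with `‖K_j − Π‖ ≤ 1`, `P_RCW = (1/d)Σⱼ K_j`, `P_DCW = K_d⋯K₁`, and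
suppose `‖P_RCW − Π‖ ≤ 1 − η_R` and `‖P_DCW − Π‖ ≤ 1 − η_D` with `η_R, η_D ∈ (0,1]`.
For `f` with `Πf = 0` (so that `Π(f²) = ‖f‖²_Π`), the asymptotic variances
`σ²_DCW(f) = ‖f‖² + 2Σ_{n≥1}⟨f, P_DCWⁿ f⟩` and
`σ²_RCWᵈ(f) = ‖f‖² + 2Σ_{n≥1}⟨f, P_RCW^{nd} f⟩` satisfy
`|σ²_DCW(f) − σ²_RCWᵈ(f)| ≤ (4/(η_R η_D))‖f‖²`. -/
theorem stmt15 {H : Type*} [NormedAddCommGroup H] [InnerProductSpace ℝ H] [CompleteSpace H]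
    {d : ℕ} (hd : 0 < d)
    (K : Fin d → H →L[ℝ] H) (Pi0 : H →L[ℝ] H)
    (hPi0sa : IsSelfAdjoint Pi0) (hPi0idem : Pi0 ∘L Pi0 = Pi0)
    (hPiK : ∀ j, Pi0 ∘L K j = Pi0) (hKPi : ∀ j, K j ∘L Pi0 = Pi0)
    (hKnorm : ∀ j, ‖K j - Pi0‖ ≤ 1)
    (ηR ηD : ℝ) (hηR : ηR ∈ Set.Ioc (0 : ℝ) 1) (hηD : ηD ∈ Set.Ioc (0 : ℝ) 1)
    (hRCW : ‖(d : ℝ)⁻¹ • (∑ j, K j) - Pi0‖ ≤ 1 - ηR)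
    (hDCW : ‖(List.ofFn K).reverse.prod - Pi0‖ ≤ 1 - ηD)
    (f : H) (hf : Pi0 f = 0) :
    |(‖f‖ ^ 2 + 2 * ∑' n : ℕ, (inner ℝ f (((List.ofFn K).reverse.prod ^ (n + 1)) f) : ℝ))
        - (‖f‖ ^ 2 + 2 * ∑' n : ℕ,
            (inner ℝ f ((((d : ℝ)⁻¹ • ∑ j, K j) ^ ((n + 1) * d)) f) : ℝ))|
      ≤ 4 / (ηR * ηD) * ‖f‖ ^ 2 := by
  obtain ⟨hR0, hR1⟩ := hηR
  obtain ⟨hD0, hD1⟩ := hηD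
  set P : H →L[ℝ] H := (List.ofFn K).reverse.prod with hP
  set Q : H →L[ℝ] H := (d : ℝ)⁻¹ • ∑ j, K j with hQ
  have h3 : Pi0 * Pi0 = Pi0 := hPi0idem
  -- list product facts
  have hlL : ∀ L : List (H →L[ℝ] H), (∀ A ∈ L, Pi0 * A = Pi0) → Pi0 * L.prod = Pi0 := by
    intro L
    induction L with
    | nil => intro _; simp
    | cons A L ih =>
      intro h
      rw [List.prod_cons, ← mul_assoc, h A List.mem_cons_self,
        ih fun B hB => h B (List.mem_cons_of_mem _ hB)]
  have hlR : ∀ L : List (H →L[ℝ] H), (∀ A ∈ L, A * Pi0 = Pi0) → L.prod * Pi0 = Pi0 := by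
    intro L
    induction L with
    | nil => intro _; simp
    | cons A L ih =>
      intro h
      rw [List.prod_cons, mul_assoc, ih fun B hB => h B (List.mem_cons_of_mem _ hB),
        h A List.mem_cons_self]
  have hmem : ∀ A ∈ (List.ofFn K).reverse, ∃ j, K j = A := by
    intro A hA
    rw [List.mem_reverse] at hA
    exact List.mem_ofFn.1 hA
  have hPiP : Pi0 * P = Pi0 := by
    refine hlL _ fun A hA => ?_
    obtain ⟨j, rfl⟩ := hmem A hA
    exact hPiK j
  have hPPi : P * Pi0 = Pi0 := by
    refine hlR _ fun A hA => ?_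
    obtain ⟨j, rfl⟩ := hmem A hA
    exact hKPi j
  have hdR : (d : ℝ) ≠ 0 := by exact_mod_cast hd.ne'
  have hPiQ : Pi0 * Q = Pi0 := by
    rw [hQ, mul_smul_comm, Finset.mul_sum]
    have : ∀ j ∈ Finset.univ, Pi0 * K j = Pi0 := fun j _ => hPiK j
    rw [Finset.sum_congr rfl this, Finset.sum_const, Finset.card_univ, Fintype.card_fin,
      ← Nat.cast_smul_eq_nsmul ℝ, smul_smul, inv_mul_cancel₀ hdR, one_smul]
  have hQPi : Q * Pi0 = Pi0 := by
    rw [hQ, smul_mul_assoc, Finset.sum_mul]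
    have : ∀ j ∈ Finset.univ, K j * Pi0 = Pi0 := fun j _ => hKPi j
    rw [Finset.sum_congr rfl this, Finset.sum_const, Finset.card_univ, Fintype.card_fin,
      ← Nat.cast_smul_eq_nsmul ℝ, smul_smul, inv_mul_cancel₀ hdR, one_smul]
  have hF : (0 : ℝ) ≤ ‖f‖ ^ 2 := by positivity
  -- termwise bounds
  have key1 : ∀ n : ℕ, |(inner ℝ f ((P ^ (n + 1)) f) : ℝ)| ≤ (1 - ηD) ^ (n + 1) * ‖f‖ ^ 2 :=
    fun n => aux_key P Pi0 hPiP hPPi h3 f hf (1 - ηD) hDCW n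
  have key2 : ∀ n : ℕ, |(inner ℝ f ((Q ^ ((n + 1) * d)) f) : ℝ)| ≤ (1 - ηR) ^ (n + 1) * ‖f‖ ^ 2 := by
    intro n
    obtain ⟨m, hm⟩ : ∃ m, (n + 1) * d = m + 1 := ⟨(n + 1) * d - 1, by
      have : 1 ≤ (n + 1) * d := Nat.one_le_iff_ne_zero.2 (by positivity)
      omega⟩
    rw [hm]
    refine (aux_key Q Pi0 hPiQ hQPi h3 f hf (1 - ηR) hRCW m).trans ?_
    have hmn : n + 1 ≤ m + 1 := by
      have := Nat.mul_le_mul_left (n + 1) hd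
      omega
    exact mul_le_mul_of_nonneg_right
      (pow_le_pow_of_le_one (by linarith) (by linarith) hmn) hF
  have B1 := aux_tsum_bound (1 - ηD) (‖f‖ ^ 2) (by linarith) (by linarith) hF _ key1
  have B2 := aux_tsum_bound (1 - ηR) (‖f‖ ^ 2) (by linarith) (by linarith) hF _ key2
  have b1 : |∑' n : ℕ, (inner ℝ f ((P ^ (n + 1)) f) : ℝ)| ≤ (1 - ηD) / ηD * ‖f‖ ^ 2 := by
    have := B1.2
    rwa [sub_sub_cancel] at this
  have b2 : |∑' n : ℕ, (inner ℝ f ((Q ^ ((n + 1) * d)) f) : ℝ)| ≤ (1 - ηR) / ηR * ‖f‖ ^ 2 := by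
    have := B2.2
    rwa [sub_sub_cancel] at this
  set S1 : ℝ := ∑' n : ℕ, (inner ℝ f ((P ^ (n + 1)) f) : ℝ)
  set S2 : ℝ := ∑' n : ℕ, (inner ℝ f ((Q ^ ((n + 1) * d)) f) : ℝ)
  have habs : |‖f‖ ^ 2 + 2 * S1 - (‖f‖ ^ 2 + 2 * S2)| ≤ 2 * |S1| + 2 * |S2| := by
    have : ‖f‖ ^ 2 + 2 * S1 - (‖f‖ ^ 2 + 2 * S2) = 2 * S1 - 2 * S2 := by ring
    rw [this]
    calc |2 * S1 - 2 * S2| ≤ |2 * S1| + |2 * S2| := abs_sub _ _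
      _ = 2 * |S1| + 2 * |S2| := by rw [abs_mul, abs_mul]; norm_num
  refine habs.trans ?_
  have hfinal : 2 * ((1 - ηD) / ηD * ‖f‖ ^ 2) + 2 * ((1 - ηR) / ηR * ‖f‖ ^ 2)
      ≤ 4 / (ηR * ηD) * ‖f‖ ^ 2 := by
    have hnum : 0 ≤ 4 - 2 * (ηR * (1 - ηD)) - 2 * (ηD * (1 - ηR)) := by nlinarith
    have heq : 4 / (ηR * ηD) * ‖f‖ ^ 2
        - (2 * ((1 - ηD) / ηD * ‖f‖ ^ 2) + 2 * ((1 - ηR) / ηR * ‖f‖ ^ 2))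
        = (4 - 2 * (ηR * (1 - ηD)) - 2 * (ηD * (1 - ηR))) / (ηR * ηD) * ‖f‖ ^ 2 := by
      field_simp
      ring
    have : 0 ≤ (4 - 2 * (ηR * (1 - ηD)) - 2 * (ηD * (1 - ηR))) / (ηR * ηD) * ‖f‖ ^ 2 := by
      apply mul_nonneg (div_nonneg hnum (by positivity)) hF
    linarith
  linarith
end

section
/- Eigenvalues of the compound-symmetry block interaction matrix: let Σ = (1−ζ)I_N + ζ·11ᵀ with ζ ∈ (0,1), Q = Σ⁻¹, N = sd with d ≥ 2 equal blocks of size s, and D = diag(Q₁₁⁻¹,…,Q_dd⁻¹). Then the eigenvalues of DQ are 1 (multiplicity d(s−1)), 1 + Υs (multiplicity d−1), and 1 − (N−s)Υ (multiplicity 1), where Υ = ζ/(1+(N−s−1)ζ); consequently the largest eigenvalue of I_N − DQ equals (N−s)ζ/(1+(N−s−1)ζ). -/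
open Matrix Polynomial

lemma aux_detaJ {d : ℕ} (hd : 2 ≤ d) (a b : ℝ) :
    (a • (1 : Matrix (Fin d) (Fin d) ℝ) + b • (Matrix.of fun _ _ => (1:ℝ))).det
      = a ^ (d - 1) * (a + d * b) := by
  by_cases ha : a = 0
  · subst ha
    rw [zero_smul, zero_add]
    have h2 : (Matrix.of fun _ _ => (1:ℝ) : Matrix (Fin d) (Fin d) ℝ).det = 0 := by
      apply Matrix.det_zero_of_row_eq (i := ⟨0, by omega⟩) (j := ⟨1, by omega⟩)
      · simp [Fin.ext_iff]
      · ext k; simp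
    rw [Matrix.det_smul, h2]
    rw [zero_pow (by omega)]
    simp
  · set U : Matrix (Fin d) (Fin 1) ℝ := Matrix.of fun _ _ => b / a with hU
    set V : Matrix (Fin 1) (Fin d) ℝ := Matrix.of fun _ _ => (1:ℝ) with hV
    have key : a • (1 : Matrix (Fin d) (Fin d) ℝ) + b • (Matrix.of fun _ _ => (1:ℝ))
        = a • (1 + U * V) := by
      ext p q
      simp only [Matrix.add_apply, Matrix.smul_apply, Matrix.one_apply, Matrix.of_apply,
        Matrix.mul_apply, smul_eq_mul, hU, hV, Finset.sum_const, Finset.card_univ,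
        Fintype.card_fin, mul_one, one_smul, nsmul_eq_mul, Nat.cast_one, one_mul, mul_add]
      by_cases h : p = q <;> simp only [h, if_true, if_false] <;> field_simp
    rw [key, Matrix.det_smul, Matrix.det_one_add_mul_comm]
    have hVU : (1 : Matrix (Fin 1) (Fin 1) ℝ) + V * U = Matrix.of fun _ _ => 1 + d * (b/a) := by
      ext i j
      simp [Matrix.mul_apply, Matrix.one_apply, Fin.ext_iff, hU, hV]
    rw [hVU]
    rw [show (Matrix.of fun _ _ => 1 + (d:ℝ) * (b/a) : Matrix (Fin 1) (Fin 1) ℝ).det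
        = 1 + d * (b/a) from Matrix.det_fin_one _]
    have : a ^ d = a ^ (d-1) * a := by
      rw [← pow_succ]; congr 1; omega
    simp only [Fintype.card_fin, smul_eq_mul, this]
    field_simp


lemma aux_keydet {s d : ℕ} (hs : 0 < s) (hd : 2 ≤ d) (α c : ℝ) (hα : α ≠ 0) :
    (α • (1 : Matrix (Fin d × Fin s) (Fin d × Fin s) ℝ)
      + c • (Matrix.of fun p q : Fin d × Fin s => if p.1 = q.1 then (0:ℝ) else 1)).det
    = α ^ (d * (s-1)) * (α - s * c) ^ (d - 1) * (α + ((s:ℝ) * d - s) * c) := by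
  set U : Matrix (Fin d × Fin s) (Fin d) ℝ :=
    Matrix.of (fun p k => if p.1 = k then (0:ℝ) else c / α) with hU
  set V : Matrix (Fin d) (Fin d × Fin s) ℝ :=
    Matrix.of (fun k p => if k = p.1 then (1:ℝ) else 0) with hV
  have key : α • (1 : Matrix (Fin d × Fin s) (Fin d × Fin s) ℝ)
      + c • (Matrix.of fun p q : Fin d × Fin s => if p.1 = q.1 then (0:ℝ) else 1)
      = α • (1 + U * V) := by
    ext p q
    simp only [Matrix.add_apply, Matrix.smul_apply, Matrix.one_apply, Matrix.of_apply,
      Matrix.mul_apply, smul_eq_mul, hU, hV, mul_ite, mul_one, mul_zero, ite_mul, zero_mul,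
      mul_add]
    rw [Finset.sum_ite_eq' (Finset.univ) q.1 (fun k => if p.1 = k then (0:ℝ) else c/α)]
    by_cases h : p = q
    · subst h; simp
    · by_cases h2 : p.1 = q.1 <;> simp [h, h2] <;> field_simp
  rw [key, Matrix.det_smul, Matrix.det_one_add_mul_comm]
  have hVU : (1 : Matrix (Fin d) (Fin d) ℝ) + V * U
      = (1 - s * c / α) • (1 : Matrix (Fin d) (Fin d) ℝ)
        + (s * c / α) • (Matrix.of fun _ _ => (1:ℝ)) := by
    ext k k'
    simp only [Matrix.add_apply, Matrix.smul_apply, Matrix.one_apply, Matrix.of_apply,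
      Matrix.mul_apply, smul_eq_mul, hU, hV, ite_mul, one_mul, zero_mul, mul_one]
    rw [Fintype.sum_prod_type]
    have hin : ∀ x : Fin d, (∑ _i : Fin s, (if k = x then if x = k' then (0:ℝ) else c / α else 0))
        = (s:ℝ) * (if k = x then if x = k' then (0:ℝ) else c / α else 0) := by
      intro x; rw [Finset.sum_const]; simp
    simp only [hin, mul_ite, mul_zero]
    rw [Finset.sum_ite_eq Finset.univ k (fun x => if x = k' then (0:ℝ) else (s:ℝ)*(c/α))]
    by_cases h : k = k'
    · subst h; simp
    · simp only [h, if_false, if_true, Finset.mem_univ, Matrix.one_apply]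
      field_simp
  rw [hVU, aux_detaJ hd]
  simp only [Fintype.card_prod, Fintype.card_fin, smul_eq_mul]
  have h1 : d * (s-1) + d = d * s := by
    cases s with
    | zero => omega
    | succ n => simp [Nat.mul_succ]
  have hds : d * s = d * (s-1) + ((d-1) + 1) := by omega
  rw [hds, pow_add, pow_add, pow_one]
  have e : α ^ (d - 1) * (1 - (s:ℝ) * c / α) ^ (d - 1) = (α - s * c) ^ (d - 1) := by
    rw [← mul_pow]; congr 1; field_simp
  have e' : α * (1 - (s:ℝ) * c / α + d * (s * c / α)) = α + ((s:ℝ) * d - s) * c := by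
    field_simp; ring
  rw [← e, ← e']
  ring


set_option maxHeartbeats 1600000 in
/-- Eigenvalues of the compound-symmetry block interaction matrix: let
`Σ = (1−ζ)I_N + ζ11ᵀ` with `ζ ∈ (0,1)` (so `Σ` has diagonal entries `1` and
off-diagonal entries `ζ`), `Q = Σ⁻¹`, `N = sd` with `d ≥ 2` equal blocks of size `s`
(indexed by `Fin d × Fin s`), and `D = diag(Q₁₁⁻¹,…,Q_dd⁻¹)` the block-diagonal matrix
of inverses of the diagonal blocks.  Then, with `Υ = ζ/(1+(N−s−1)ζ)`, the eigenvalues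
of `DQ` are `1` with multiplicity `d(s−1)`, `1 + Υs` with multiplicity `d−1`, and
`1 − (N−s)Υ` with multiplicity `1` (stated via the characteristic polynomial), and
consequently the largest eigenvalue of `I_N − DQ` equals `(N−s)ζ/(1+(N−s−1)ζ)`. -/
theorem stmt17 {s d : ℕ} (hs : 0 < s) (hd : 2 ≤ d) (ζ : ℝ) (hζ : ζ ∈ Set.Ioo (0 : ℝ) 1)
    (S : Matrix (Fin d × Fin s) (Fin d × Fin s) ℝ)
    (hS : S = Matrix.of fun p q => if p = q then (1 : ℝ) else ζ)
    (Q : Matrix (Fin d × Fin s) (Fin d × Fin s) ℝ) (hQ : Q = S⁻¹)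
    (D : Matrix (Fin d × Fin s) (Fin d × Fin s) ℝ)
    (hD : D = Matrix.of fun p q =>
      if p.1 = q.1 then
        ((Matrix.of fun i i' : Fin s => Q (p.1, i) (p.1, i'))⁻¹) p.2 q.2
      else 0) :
    (D * Q).charpoly
        = (X - C 1) ^ (d * (s - 1))
          * (X - C (1 + ζ / (1 + ((s : ℝ) * d - s - 1) * ζ) * s)) ^ (d - 1)
          * (X - C (1 - ((s : ℝ) * d - s) * (ζ / (1 + ((s : ℝ) * d - s - 1) * ζ))))
      ∧ IsGreatest (spectrum ℝ ((1 : Matrix (Fin d × Fin s) (Fin d × Fin s) ℝ) - D * Q))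
          (((s : ℝ) * d - s) * ζ / (1 + ((s : ℝ) * d - s - 1) * ζ)) := by
  obtain ⟨hζ0, hζ1⟩ := hζ
  have hs1 : (1:ℝ) ≤ s := by exact_mod_cast hs
  have hd2 : (2:ℝ) ≤ d := by exact_mod_cast hd
  have hsd1 : (1:ℝ) ≤ (s:ℝ) * d - s := by nlinarith
  have hden1 : (0:ℝ) < 1 - ζ := by linarith
  set num : ℝ := 1 + ((s : ℝ) * d - s - 1) * ζ with hnum
  have hnump : 0 < num := by rw [hnum]; nlinarith
  set den2 : ℝ := 1 + ((s : ℝ) * d - 1) * ζ with hden2def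
  have hden2p : 0 < den2 := by rw [hden2def]; nlinarith
  set Υ : ℝ := ζ / num with hΥ
  have hΥp : 0 < Υ := div_pos hζ0 hnump
  set a : ℝ := (1 - ζ)⁻¹ with ha
  set b : ℝ := -(ζ / ((1 - ζ) * den2)) with hb
  set c : ℝ := (1 - ζ) * Υ with hc
  set Jn : Matrix (Fin d × Fin s) (Fin d × Fin s) ℝ := Matrix.of fun _ _ => (1:ℝ) with hJn
  set Js : Matrix (Fin s) (Fin s) ℝ := Matrix.of fun _ _ => (1:ℝ) with hJs
  set B : Matrix (Fin d × Fin s) (Fin d × Fin s) ℝ :=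
    Matrix.of fun p q => if p.1 = q.1 then (1:ℝ) else 0 with hB
  set K : Matrix (Fin d × Fin s) (Fin d × Fin s) ℝ :=
    Matrix.of fun p q => if p.1 = q.1 then (0:ℝ) else 1 with hK
  have hden1' : (1:ℝ) - ζ ≠ 0 := ne_of_gt hden1
  have hden2' : den2 ≠ 0 := ne_of_gt hden2p
  have hnum' : num ≠ 0 := ne_of_gt hnump
  -- S as a linear combination
  have hSJ : S = (1 - ζ) • (1 : Matrix (Fin d × Fin s) (Fin d × Fin s) ℝ) + ζ • Jn := by
    rw [hS]; ext p q
    by_cases h : p = q <;> simp [h, Matrix.one_apply, hJn]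
  have hJJ : Jn * Jn = ((s:ℝ) * (d:ℝ)) • Jn := by
    ext p q
    simp [hJn, Matrix.mul_apply, Finset.card_univ]
    ring
  have key1 : S * (a • (1 : Matrix (Fin d × Fin s) (Fin d × Fin s) ℝ) + b • Jn) = 1 := by
    have expand : S * (a • (1 : Matrix (Fin d × Fin s) (Fin d × Fin s) ℝ) + b • Jn)
        = ((1 - ζ) * a) • (1 : Matrix (Fin d × Fin s) (Fin d × Fin s) ℝ)
          + ((1 - ζ) * b + ζ * a + ζ * (b * ((s:ℝ) * d))) • Jn := by
      rw [hSJ]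
      simp only [Matrix.add_mul, Matrix.mul_add, smul_mul_assoc, mul_smul_comm, hJJ,
        Matrix.one_mul, Matrix.mul_one, smul_smul]
      module
    have e1 : (1 - ζ) * a = 1 := by rw [ha]; field_simp
    have e2 : (1 - ζ) * b + ζ * a + ζ * (b * ((s:ℝ) * d)) = 0 := by
      rw [ha, hb]; field_simp; rw [hden2def]; ring
    rw [expand, e1, e2, one_smul, zero_smul, add_zero]
  have hQJ : Q = a • (1 : Matrix (Fin d × Fin s) (Fin d × Fin s) ℝ) + b • Jn := by
    rw [hQ]; exact Matrix.inv_eq_right_inv key1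
  -- diagonal blocks of Q
  have hblock : ∀ j : Fin d, (Matrix.of fun i i' : Fin s => Q (j, i) (j, i'))
      = a • (1 : Matrix (Fin s) (Fin s) ℝ) + b • Js := by
    intro j; ext i i'
    by_cases h : i = i' <;>
      simp [hQJ, h, Matrix.one_apply, hJn, hJs, Prod.ext_iff]
  have hJsJs : Js * Js = (s:ℝ) • Js := by
    ext i i'
    simp [hJs, Matrix.mul_apply, Finset.card_univ]
  have key2 : (a • (1 : Matrix (Fin s) (Fin s) ℝ) + b • Js)
      * ((1 - ζ) • (1 : Matrix (Fin s) (Fin s) ℝ) + c • Js) = 1 := by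
    have expand : (a • (1 : Matrix (Fin s) (Fin s) ℝ) + b • Js)
        * ((1 - ζ) • (1 : Matrix (Fin s) (Fin s) ℝ) + c • Js)
        = (a * (1 - ζ)) • (1 : Matrix (Fin s) (Fin s) ℝ)
          + (a * c + b * (1 - ζ) + b * (c * (s:ℝ))) • Js := by
      simp only [Matrix.add_mul, Matrix.mul_add, smul_mul_assoc, mul_smul_comm, hJsJs,
        Matrix.one_mul, Matrix.mul_one, smul_smul]
      module
    have e1 : a * (1 - ζ) = 1 := by rw [ha]; field_simp
    have e2 : a * c + b * (1 - ζ) + b * (c * (s:ℝ)) = 0 := by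
      rw [ha, hb, hc, hΥ]; field_simp; rw [hden2def, hnum]; ring
    rw [expand, e1, e2, one_smul, zero_smul, add_zero]
  have hinvblock : (a • (1 : Matrix (Fin s) (Fin s) ℝ) + b • Js)⁻¹
      = (1 - ζ) • (1 : Matrix (Fin s) (Fin s) ℝ) + c • Js :=
    Matrix.inv_eq_right_inv key2
  -- explicit form of D
  have hDf : D = (1 - ζ) • (1 : Matrix (Fin d × Fin s) (Fin d × Fin s) ℝ) + c • B := by
    rw [hD]; ext p q
    simp only [Matrix.of_apply]
    by_cases h : p.1 = q.1
    · rw [if_pos h, hblock p.1, hinvblock]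
      have hpq : (p = q) ↔ (p.2 = q.2) := by
        constructor
        · intro hh; rw [hh]
        · intro hh; exact Prod.ext h hh
      by_cases h2 : p.2 = q.2 <;>
        simp [Matrix.one_apply, hB, hJs, h, h2, hpq, hpq.symm, Prod.ext_iff]
    · rw [if_neg h]
      have hpq : p ≠ q := fun hh => h (by rw [hh])
      simp [Matrix.one_apply, hB, h, hpq]
  have hBJ : B * Jn = (s:ℝ) • Jn := by
    ext p q
    simp only [hB, hJn, Matrix.mul_apply, Matrix.of_apply, Matrix.smul_apply, mul_one,
      smul_eq_mul]
    rw [Fintype.sum_prod_type]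
    simp [apply_ite (Finset.card), apply_ite (Nat.cast : ℕ → ℝ), Finset.sum_ite_eq,
      Finset.card_univ]
  -- explicit form of D*Q
  have hDQ : D * Q = 1 + (-Υ) • Jn + Υ • B := by
    have expand : D * Q
        = ((1 - ζ) * a) • (1 : Matrix (Fin d × Fin s) (Fin d × Fin s) ℝ)
          + ((1 - ζ) * b + c * (b * (s:ℝ))) • Jn + (c * a) • B := by
      rw [hDf, hQJ]
      simp only [Matrix.add_mul, Matrix.mul_add, smul_mul_assoc, mul_smul_comm, hBJ,
        Matrix.one_mul, Matrix.mul_one, smul_smul]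
      module
    have e1 : (1 - ζ) * a = 1 := by rw [ha]; field_simp
    have e2 : (1 - ζ) * b + c * (b * (s:ℝ)) = -Υ := by
      rw [hb, hc, hΥ]; field_simp; rw [hden2def, hnum]; ring
    have e3 : c * a = Υ := by rw [ha, hc]; field_simp
    rw [expand, e1, e2, e3, one_smul]
  -- evaluation of the characteristic polynomial
  have hcharM : ∀ x : ℝ, ((D * Q).charpoly).eval x
      = (x • (1 : Matrix (Fin d × Fin s) (Fin d × Fin s) ℝ) - D * Q).det := by
    intro x
    rw [Matrix.charpoly, ← Polynomial.coe_evalRingHom, RingHom.map_det]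
    congr 1
    ext p q
    by_cases h : p = q
    · subst h
      simp [Matrix.charmatrix_apply_eq, Matrix.one_apply]
    · simp [Matrix.charmatrix_apply_ne _ _ _ h, Matrix.one_apply, h]
  have hXK : ∀ x : ℝ, x • (1 : Matrix (Fin d × Fin s) (Fin d × Fin s) ℝ) - D * Q
      = (x - 1) • (1 : Matrix (Fin d × Fin s) (Fin d × Fin s) ℝ) + Υ • K := by
    intro x
    rw [hDQ]; ext p q
    by_cases h : p = q
    · subst h
      simp [Matrix.one_apply, hB, hK, hJn]
    · by_cases h2 : p.1 = q.1 <;>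
        simp [Matrix.one_apply, hB, hK, hJn, h, h2]
  constructor
  · -- characteristic polynomial
    apply Polynomial.eq_of_infinite_eval_eq
    apply Set.Infinite.mono (s := {x : ℝ | x ≠ 1})
    · intro x hx
      have hx1 : x ≠ 1 := hx
      simp only [Set.mem_setOf_eq]
      rw [hcharM x, hXK x, aux_keydet hs hd (x - 1) Υ (sub_ne_zero.mpr hx1)]
      simp only [eval_mul, eval_pow, eval_sub, eval_X, eval_C]
      have r1 : x - (1 + Υ * (s:ℝ)) = (x - 1) - (s:ℝ) * Υ := by ring
      have r2 : x - (1 - ((s:ℝ) * d - s) * Υ) = (x - 1) + ((s:ℝ) * d - s) * Υ := by ring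
      rw [r1, r2]
    · exact Set.Finite.infinite_compl (Set.finite_singleton 1)
  · -- spectrum
    have hA : (1 : Matrix (Fin d × Fin s) (Fin d × Fin s) ℝ) - D * Q = Υ • K := by
      have := hXK 1
      rw [one_smul] at this
      rw [this, sub_self, zero_smul, zero_add]
    have hspec : ∀ μ : ℝ, μ ∈ spectrum ℝ ((1 : Matrix (Fin d × Fin s) (Fin d × Fin s) ℝ) - D * Q)
        ↔ (μ • (1 : Matrix (Fin d × Fin s) (Fin d × Fin s) ℝ) + (-Υ) • K).det = 0 := by
      intro μ
      rw [spectrum.mem_iff, Matrix.isUnit_iff_isUnit_det, isUnit_iff_ne_zero, not_not,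
        Algebra.algebraMap_eq_smul_one, hA]
      rw [show μ • (1 : Matrix (Fin d × Fin s) (Fin d × Fin s) ℝ) - Υ • K
          = μ • (1 : Matrix (Fin d × Fin s) (Fin d × Fin s) ℝ) + (-Υ) • K by
        rw [neg_smul, sub_eq_add_neg]]
    set μ₀ : ℝ := ((s:ℝ) * d - s) * ζ / num with hμ₀def
    have hμ0 : μ₀ = ((s:ℝ) * d - s) * Υ := by rw [hμ₀def, hΥ]; ring
    have hμ0pos : 0 < μ₀ := by
      rw [hμ₀def]
      positivity
    constructor
    · rw [hspec, aux_keydet hs hd μ₀ (-Υ) (ne_of_gt hμ0pos)]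
      apply mul_eq_zero_of_right
      rw [hμ0]; ring
    · intro μ hμ
      rw [hspec] at hμ
      by_cases h0 : μ = 0
      · subst h0; exact le_of_lt hμ0pos
      rw [aux_keydet hs hd μ (-Υ) h0] at hμ
      rcases mul_eq_zero.mp hμ with h | h
      · rcases mul_eq_zero.mp h with h | h
        · exact absurd (pow_eq_zero_iff'.mp h).1 h0
        · have h' : μ - (s:ℝ) * (-Υ) = 0 := (pow_eq_zero_iff (by omega : d - 1 ≠ 0)).mp h
          nlinarith
      · have : μ = μ₀ := by rw [hμ0]; linarith
        exact this.le
end
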